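/- arXiv:1201.1818 — 5 statements merged into one kernel-verified Lean document; each statement's English description precedes it below -/
import Mathlib

section
/- Let (M,d) be a metric space with a σ-finite Borel measure μ, let m ≥ 1, 1 ≤ p < ∞, and write X = L^p(μ; ℂ^m). Let D : Dom(D) ⊆ X → X be a densely defined linear operator and let V : ℝ → B(X) be a C₀ group generated by iD. Let η : M → ℝ be a bounded Lipschitz function such that η·u ∈ Dom(D) for every u ∈ Dom(D), and suppose C_η ∈ B(X) is a bounded operator satisfying C_η u = η·(Du) − D(η·u) for all u ∈ Dom(D). Then for every t ∈ ℝ and every u ∈ X, η·(V(t)u) − V(t)(η·u) = i·t·∫₀¹ V(st) C_η V((1−s)t) u ds, where the integral is a Bochner integral in X over s ∈ [0,1]. -/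
/-!
Write `A` for multiplication by `η` and `C` for `C_η`. For `v` in the domain,
`s ↦ V(st) A V((1-s)t) v` runs from `A V(t) v` to `V(t) A v`, and its derivative is
`-it V(st) (A D - D A) V((1-s)t) v = -it V(st) C V((1-s)t) v` because `V` commutes with `D`; the
fundamental theorem of calculus gives the formula on the domain. A strongly continuous family is
locally bounded by Banach–Steinhaus, hence jointly continuous, so both sides are continuous in `v`
and the formula extends from the dense domain to all of `X`.
-/

open MeasureTheory Complex Filter Topology

namespace ContinuousLinearMap

section StronglyContinuous

variable {𝕜 T E F : Type*} [NontriviallyNormedField 𝕜] [TopologicalSpace T]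
  [NormedAddCommGroup E] [NormedSpace 𝕜 E] [CompleteSpace E]
  [NormedAddCommGroup F] [NormedSpace 𝕜 F] {V : T → E →L[𝕜] F}

theorem _root_.IsCompact.exists_forall_opNorm_le_of_continuousOn_apply {K : Set T}
    (hK : IsCompact K) (hV : ∀ x, ContinuousOn (fun t => V t x) K) :
    ∃ C, ∀ t ∈ K, ‖V t‖ ≤ C := by
  have hbdd (x : E) : ∃ C, ∀ t : K, ‖V t x‖ ≤ C := by
    obtain ⟨C, hC⟩ := hK.exists_bound_of_continuousOn (hV x)
    exact ⟨C, fun t => hC t t.2⟩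
  obtain ⟨C, hC⟩ := banach_steinhaus (g := fun t : K => V t) hbdd
  exact ⟨C, fun t ht => hC ⟨t, ht⟩⟩

theorem continuous_uncurry_of_continuous_apply [WeaklyLocallyCompactSpace T]
    (hV : ∀ x, Continuous fun t => V t x) : Continuous fun q : T × E => V q.1 q.2 := by
  refine continuous_iff_continuousAt.2 fun ⟨t₀, x₀⟩ => ?_
  obtain ⟨K, hKc, hK⟩ := exists_compact_mem_nhds t₀
  obtain ⟨C, hC⟩ := hKc.exists_forall_opNorm_le_of_continuousOn_apply fun x => (hV x).continuousOn
  have hsmall : Tendsto (fun q : T × E => V q.1 (q.2 - x₀)) (𝓝 (t₀, x₀)) (𝓝 0) := by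
    refine squeeze_zero_norm' (a := fun q : T × E => C * ‖q.2 - x₀‖) ?_ ?_
    · filter_upwards [continuous_fst.continuousAt.preimage_mem_nhds hK] with q hq
      exact (V q.1).le_of_opNorm_le (hC _ hq) _
    · have hdist : Continuous fun q : T × E => C * ‖q.2 - x₀‖ := by fun_prop
      simpa using hdist.tendsto (t₀, x₀)
  have hfixed : Tendsto (fun q : T × E => V q.1 x₀) (𝓝 (t₀, x₀)) (𝓝 (V t₀ x₀)) :=
    ((hV x₀).comp continuous_fst).tendsto _
  simpa [ContinuousAt] using hsmall.add hfixed

end StronglyContinuous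

end ContinuousLinearMap

section Derivative

variable {𝕜 T E F : Type*} [NontriviallyNormedField 𝕜] [NormedAlgebra ℝ 𝕜] [TopologicalSpace T]
  [NormedAddCommGroup E] [NormedSpace 𝕜 E] [NormedSpace ℝ E] [IsScalarTower ℝ 𝕜 E]
  [NormedAddCommGroup F] [NormedSpace 𝕜 F] [NormedSpace ℝ F] [IsScalarTower ℝ 𝕜 F]
  {V : T → E →L[𝕜] F}

theorem HasDerivAt.clm_apply_of_continuous_uncurry {φ : ℝ → T} {w : ℝ → E} {w' : E} {d : F}
    {s₀ : ℝ} (hV : Continuous fun q : T × E => V q.1 q.2) (hφ : ContinuousAt φ s₀)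
    (hw : HasDerivAt w w' s₀) (hd : HasDerivAt (fun s => V (φ s) (w s₀)) d s₀) :
    HasDerivAt (fun s => V (φ s) (w s)) (V (φ s₀) w' + d) s₀ := by
  have hincrement : HasDerivAt (fun s => V (φ s) (w s - w s₀)) (V (φ s₀) w') s₀ := by
    rw [hasDerivAt_iff_tendsto_slope]
    have hslope : Tendsto (fun s => (φ s, slope w s₀ s)) (𝓝[≠] s₀) (𝓝 (φ s₀, w')) :=
      (hφ.tendsto.mono_left nhdsWithin_le_nhds).prodMk_nhds (hasDerivAt_iff_tendsto_slope.1 hw)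
    refine ((hV.tendsto _).comp hslope).congr fun s => ?_
    simp only [Function.comp, slope_def_module, sub_self, map_zero, sub_zero,
      ContinuousLinearMap.map_smul_of_tower]
  exact (hincrement.add hd).congr_of_eventuallyEq (.of_forall fun s => by simp)

end Derivative

section Split

variable {𝕜 E : Type*} [NontriviallyNormedField 𝕜] [NormedAddCommGroup E] [NormedSpace 𝕜 E]
  [CompleteSpace E] {V : ℝ → E →L[𝕜] E}

theorem continuous_split_apply (hVcont : ∀ u, Continuous fun t => V t u) (B : E →L[𝕜] E) (t : ℝ) :
    Continuous fun q : E × ℝ => V (q.2 * t) (B (V ((1 - q.2) * t) q.1)) := by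
  have hV := ContinuousLinearMap.continuous_uncurry_of_continuous_apply hVcont
  refine hV.comp ((continuous_snd.mul continuous_const).prodMk (B.continuous.comp ?_))
  exact hV.comp (((continuous_const.sub continuous_snd).mul continuous_const).prodMk continuous_fst)

end Split

section Commutator

variable {X : Type*} [NormedAddCommGroup X] [NormedSpace ℂ X] [NormedSpace ℝ X]
  [IsScalarTower ℝ ℂ X] [CompleteSpace X]
  {Dom : Submodule ℂ X} {D : X → X} {V : ℝ → X →L[ℂ] X} {A C : X →L[ℂ] X}

theorem hasDerivAt_conj_commutator
    (hVcont : ∀ u, Continuous fun t => V t u) (hVdom : ∀ t : ℝ, ∀ u ∈ Dom, V t u ∈ Dom)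
    (hVderiv : ∀ t : ℝ, ∀ u ∈ Dom, HasDerivAt (fun s => V s u) (I • V t (D u)) t)
    (hVD : ∀ t : ℝ, ∀ u ∈ Dom, V t (D u) = D (V t u))
    (hAdom : ∀ u ∈ Dom, A u ∈ Dom) (hC : ∀ u ∈ Dom, C u = A (D u) - D (A u))
    (t s₀ : ℝ) {v : X} (hv : v ∈ Dom) :
    HasDerivAt (fun s => V (s * t) (A (V ((1 - s) * t) v)))
      (-(I * t) • V (s₀ * t) (C (V ((1 - s₀) * t) v))) s₀ := by
  have hvs : V ((1 - s₀) * t) v ∈ Dom := hVdom _ _ hv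
  have hinner : HasDerivAt (fun s => V ((1 - s) * t) v)
      ((-t) • I • V ((1 - s₀) * t) (D v)) s₀ := by
    have h := (hasDerivAt_id s₀).const_sub 1 |>.mul_const t
    exact (hVderiv _ _ hv).scomp s₀ (by simpa using h)
  have houter : HasDerivAt (fun s => V (s * t) (A (V ((1 - s₀) * t) v)))
      (t • I • V (s₀ * t) (D (A (V ((1 - s₀) * t) v)))) s₀ :=
    (hVderiv _ _ (hAdom _ hvs)).scomp s₀ (by simpa using (hasDerivAt_id s₀).mul_const t)
  have hAinner := (A.hasFDerivAt.restrictScalars ℝ).comp_hasDerivAt s₀ hinner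
  refine (hAinner.clm_apply_of_continuous_uncurry
    (ContinuousLinearMap.continuous_uncurry_of_continuous_apply hVcont)
    (continuous_mul_const t).continuousAt houter).congr_deriv ?_
  rw [hC _ hvs, hVD _ _ hv, map_sub]
  simp only [ContinuousLinearMap.coe_restrictScalars', ContinuousLinearMap.map_smul_of_tower,
    map_smul]
  match_scalars <;> (simp only [coe_algebraMap]; ring)

theorem commutator_eq_integral_of_mem
    (hV0 : V 0 = ContinuousLinearMap.id ℂ X) (hVcont : ∀ u, Continuous fun t => V t u)
    (hVdom : ∀ t : ℝ, ∀ u ∈ Dom, V t u ∈ Dom)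
    (hVderiv : ∀ t : ℝ, ∀ u ∈ Dom, HasDerivAt (fun s => V s u) (I • V t (D u)) t)
    (hVD : ∀ t : ℝ, ∀ u ∈ Dom, V t (D u) = D (V t u))
    (hAdom : ∀ u ∈ Dom, A u ∈ Dom) (hC : ∀ u ∈ Dom, C u = A (D u) - D (A u))
    (t : ℝ) {v : X} (hv : v ∈ Dom) :
    A (V t v) - V t (A v) = (I * t) • ∫ s in (0 : ℝ)..1, V (s * t) (C (V ((1 - s) * t) v)) := by
  have hint : Continuous fun s => V (s * t) (C (V ((1 - s) * t) v)) :=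
    (continuous_split_apply hVcont C t).comp (continuous_const.prodMk continuous_id)
  have hftc := intervalIntegral.integral_eq_sub_of_hasDerivAt
    (fun s _ => hasDerivAt_conj_commutator hVcont hVdom hVderiv hVD hAdom hC t s hv)
    ((hint.const_smul (-(I * t))).intervalIntegrable 0 1)
  simp only [intervalIntegral.integral_neg, intervalIntegral.integral_smul, zero_mul, one_mul,
    sub_zero, sub_self, hV0, ContinuousLinearMap.id_apply, neg_smul] at hftc
  rw [← neg_sub, ← hftc, neg_neg]

theorem commutator_eq_integral (hdense : Dense (Dom : Set X))
    (hV0 : V 0 = ContinuousLinearMap.id ℂ X) (hVcont : ∀ u, Continuous fun t => V t u)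
    (hVdom : ∀ t : ℝ, ∀ u ∈ Dom, V t u ∈ Dom)
    (hVderiv : ∀ t : ℝ, ∀ u ∈ Dom, HasDerivAt (fun s => V s u) (I • V t (D u)) t)
    (hVD : ∀ t : ℝ, ∀ u ∈ Dom, V t (D u) = D (V t u))
    (hAdom : ∀ u ∈ Dom, A u ∈ Dom) (hC : ∀ u ∈ Dom, C u = A (D u) - D (A u)) (t : ℝ) (u : X) :
    A (V t u) - V t (A u) = (I * t) • ∫ s in (0 : ℝ)..1, V (s * t) (C (V ((1 - s) * t) u)) := by
  refine congrFun (Continuous.ext_on hdense ?_ ?_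
    fun v hv => commutator_eq_integral_of_mem hV0 hVcont hVdom hVderiv hVD hAdom hC t hv) u
  · fun_prop
  · exact (intervalIntegral.continuous_parametric_intervalIntegral_of_continuous'
      (continuous_split_apply hVcont C t) 0 1).const_smul _

end Commutator

theorem commutator_group_formula_general
    {M : Type*} [MeasurableSpace M]
    (μ : Measure M)
    (m : ℕ) (p : ENNReal) [hp1 : Fact (1 ≤ p)]
    (Dom : Submodule ℂ (Lp (EuclideanSpace ℂ (Fin m)) p μ))
    (hdense : Dense (Dom : Set (Lp (EuclideanSpace ℂ (Fin m)) p μ)))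
    (D : Lp (EuclideanSpace ℂ (Fin m)) p μ → Lp (EuclideanSpace ℂ (Fin m)) p μ)
    (V : ℝ → Lp (EuclideanSpace ℂ (Fin m)) p μ →L[ℂ]
      Lp (EuclideanSpace ℂ (Fin m)) p μ)
    (hV0 : V 0 = ContinuousLinearMap.id ℂ _)
    (hVcont : ∀ u, Continuous fun t => V t u)
    (hVdom : ∀ t : ℝ, ∀ u ∈ Dom, V t u ∈ Dom)
    (hVderiv : ∀ t : ℝ, ∀ u ∈ Dom,
      HasDerivAt (fun s => V s u) (Complex.I • V t (D u)) t)
    (hVD : ∀ t : ℝ, ∀ u ∈ Dom, V t (D u) = D (V t u))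
    (L : NNReal)
    (Mη : Lp (EuclideanSpace ℂ (Fin m)) p μ →L[ℂ] Lp (EuclideanSpace ℂ (Fin m)) p μ)
    (hMηdom : ∀ u ∈ Dom, Mη u ∈ Dom)
    (Cη : Lp (EuclideanSpace ℂ (Fin m)) p μ →L[ℂ] Lp (EuclideanSpace ℂ (Fin m)) p μ)
    (hCη : ∀ u ∈ Dom, Cη u = Mη (D u) - D (Mη u))
    (t : ℝ) (u : Lp (EuclideanSpace ℂ (Fin m)) p μ) :
    Mη (V t u) - V t (Mη u) =
      (Complex.I * (t : ℂ)) •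
        ∫ s in (0:ℝ)..1, V (s * t) (Cη (V ((1 - s) * t) u)) :=
  commutator_eq_integral hdense hV0 hVcont hVdom hVderiv hVD hMηdom hCη t u

/-- **Commutator formula for `C₀` groups** (McIntosh–Morris, Lemma 3.4):
`[ηI, e^{itD}]u = it ∫₀¹ e^{istD} [ηI, D] e^{i(1-s)tD} u ds`. -/
theorem commutator_group_formula
    {M : Type*} [MetricSpace M] [MeasurableSpace M] [BorelSpace M]
    (μ : Measure M) [SigmaFinite μ]
    (m : ℕ) (hm : 1 ≤ m) (p : ENNReal) [hp1 : Fact (1 ≤ p)] (hp2 : p ≠ ⊤)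
    (Dom : Submodule ℂ (Lp (EuclideanSpace ℂ (Fin m)) p μ))
    (hdense : Dense (Dom : Set (Lp (EuclideanSpace ℂ (Fin m)) p μ)))
    (D : Lp (EuclideanSpace ℂ (Fin m)) p μ → Lp (EuclideanSpace ℂ (Fin m)) p μ)
    (hDadd : ∀ u ∈ Dom, ∀ v ∈ Dom, D (u + v) = D u + D v)
    (hDsmul : ∀ (a : ℂ), ∀ u ∈ Dom, D (a • u) = a • D u)
    (V : ℝ → Lp (EuclideanSpace ℂ (Fin m)) p μ →L[ℂ]
      Lp (EuclideanSpace ℂ (Fin m)) p μ)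
    (hV0 : V 0 = ContinuousLinearMap.id ℂ _)
    (hVgrp : ∀ s t : ℝ, V (s + t) = (V s).comp (V t))
    (hVcont : ∀ u, Continuous fun t => V t u)
    (hVdom : ∀ t : ℝ, ∀ u ∈ Dom, V t u ∈ Dom)
    (hVderiv : ∀ t : ℝ, ∀ u ∈ Dom,
      HasDerivAt (fun s => V s u) (Complex.I • V t (D u)) t)
    (hVD : ∀ t : ℝ, ∀ u ∈ Dom, V t (D u) = D (V t u))
    (η : M → ℝ) (L : NNReal) (hηLip : LipschitzWith L η) (hηbdd : ∃ C, ∀ x, |η x| ≤ C)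
    (Mη : Lp (EuclideanSpace ℂ (Fin m)) p μ →L[ℂ] Lp (EuclideanSpace ℂ (Fin m)) p μ)
    (hMη : ∀ u, (Mη u : M → EuclideanSpace ℂ (Fin m))
      =ᵐ[μ] fun x => (η x : ℂ) • (u : M → EuclideanSpace ℂ (Fin m)) x)
    (hMηdom : ∀ u ∈ Dom, Mη u ∈ Dom)
    (Cη : Lp (EuclideanSpace ℂ (Fin m)) p μ →L[ℂ] Lp (EuclideanSpace ℂ (Fin m)) p μ)
    (hCη : ∀ u ∈ Dom, Cη u = Mη (D u) - D (Mη u))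
    (t : ℝ) (u : Lp (EuclideanSpace ℂ (Fin m)) p μ) :
    Mη (V t u) - V t (Mη u) =
      (Complex.I * (t : ℂ)) •
        ∫ s in (0:ℝ)..1, V (s * t) (Cη (V ((1 - s) * t) u)) :=
  commutator_group_formula_general μ m p (hp1 := hp1) Dom hdense D V hV0 hVcont hVdom hVderiv hVD L
    Mη hMηdom Cη hCη t u
end

section
/- Let (M,d) be a metric space with a σ-finite Borel measure μ, let m ≥ 1, 1 ≤ p < ∞, and write X = L^p(μ;ℂ^m). Let D : Dom(D) ⊆ X → X be a densely defined linear operator and let V : ℝ → B(X) be a C₀ group generated by iD satisfying ‖V(t)‖ ≤ c·e^{ω|t|} for all t ∈ ℝ, for some c ≥ 1 and ω ≥ 0. Let η : M → ℝ be a bounded Lipschitz function such that η·u ∈ Dom(D) for all u ∈ Dom(D), and suppose C_η ∈ B(X) satisfies C_η u = η·(Du) − D(η·u) for all u ∈ Dom(D) and commutes with M_η. Define δ(S) := M_η S − S M_η, δ⁰(S) := S, δ^{n+1}(S) := δ(δⁿ(S)). Then for every n ∈ ℕ (n ≥ 0) and every t ∈ ℝ, the operator norm satisfies ‖δⁿ(V(t))‖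 ≤ (c·|t|·‖C_η‖)ⁿ · c·e^{ω|t|}. -/
/-!
Write `Vₖ(s) = δᵏ(V(s))`. On `Dom`, the Leibniz rule for `δ` and `[M_η, C_η] = 0` give
`Vₖ' = iD Vₖ + k i C_η Vₖ₋₁`, so Duhamel's formula and `Vₖ₊₁(0) = δᵏ⁺¹(I) = 0` yield
`Vₖ₊₁(t) = (k+1) i ∫₀ᵗ V(t-s) C_η Vₖ(s) ds`. Since `|t-s| + |s| = |t|` for `s` between `0`
and `t`, the exponential weights combine to `e^{ω|t|}`, and `∫₀ᵗ (k+1)|s|ᵏ ds = |t|ᵏ⁺¹` closes the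
induction on the dense domain; density extends the bound to all of `X`.
-/

open Filter Set MeasureTheory

theorem ContinuousLinearMap.opNorm_le_of_dense {𝕜 E F : Type*} [NontriviallyNormedField 𝕜]
    [NormedAddCommGroup E] [NormedSpace 𝕜 E] [NormedAddCommGroup F] [NormedSpace 𝕜 F]
    {S : Set E} (hS : Dense S) {T : E →L[𝕜] F} {C : ℝ} (hC : 0 ≤ C)
    (h : ∀ u ∈ S, ‖T u‖ ≤ C * ‖u‖) : ‖T‖ ≤ C :=
  T.opNorm_le_bound hC (hS.induction h (isClosed_le (by fun_prop) (by fun_prop)))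

theorem abs_intervalIntegral_abs_pow (n : ℕ) (t : ℝ) :
    |∫ s in (0 : ℝ)..t, |s| ^ n| = |t| ^ (n + 1) / (n + 1) := by
  rw [intervalIntegral.abs_intervalIntegral_eq]
  have h := integral_pow_abs_sub_uIoc (a := (0 : ℝ)) (b := t) (n := n)
  simp only [sub_zero] at h
  rw [h, abs_of_nonneg (by positivity)]

theorem abs_sub_add_abs_of_mem_uIcc {s t : ℝ} (hs : s ∈ uIcc 0 t) : |t - s| + |s| = |t| := by
  have := dist_add_dist_of_mem_segment (segment_eq_uIcc (0 : ℝ) t ▸ hs)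
  rw [Real.dist_eq, Real.dist_eq, Real.dist_eq] at this
  rw [zero_sub, zero_sub, abs_neg, abs_neg, abs_sub_comm] at this
  linarith

section StronglyContinuous

variable {T X : Type*} [TopologicalSpace T] [WeaklyLocallyCompactSpace T]
  [NormedAddCommGroup X] [NormedSpace ℂ X]

theorem continuous_uncurry_of_norm_le {V : T → X →L[ℂ] X} {B : T → ℝ} (hB : Continuous B)
    (hVB : ∀ t, ‖V t‖ ≤ B t) (hV : ∀ u, Continuous fun t => V t u) :
    Continuous fun q : T × X => V q.1 q.2 := by
  refine continuous_iff_continuousAt.2 fun q => ?_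
  obtain ⟨K, hK, hKq⟩ := exists_compact_mem_nhds q.1
  obtain ⟨C, hC⟩ := hK.exists_bound_of_continuousOn hB.continuousOn
  have hlip : ∀ t ∈ K, LipschitzWith C.toNNReal (V t) := fun t ht =>
    (V t).lipschitz.weaken <| by
      rw [← NNReal.coe_le_coe, coe_nnnorm, Real.coe_toNNReal']
      exact ((hVB t).trans (le_abs_self _)).trans ((hC t ht).trans (le_max_left _ _))
  have hon : ContinuousOn (fun q : T × X => V q.1 q.2) (K ×ˢ univ) :=
    continuousOn_prod_of_continuousOn_lipschitzOnWith' _ C.toNNReal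
      (fun t ht => (hlip t ht).lipschitzOnWith) fun u _ => (hV u).continuousOn
  exact hon.continuousAt (prod_mem_nhds hKq univ_mem)

theorem HasDerivAt.apply_of_continuous_uncurry {V : ℝ → X →L[ℂ] X}
    (hV : Continuous fun q : ℝ × X => V q.1 q.2) {φ : ℝ → ℝ} {w : ℝ → X} {φ' s : ℝ}
    {w' y : X} (hφ : HasDerivAt φ φ' s) (hw : HasDerivAt w w' s)
    (hVw : HasDerivAt (fun r => V r (w s)) y (φ s)) :
    HasDerivAt (fun σ => V (φ σ) (w σ)) (V (φ s) w' + φ' • y) s := by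
  have hslope : slope (fun σ => V (φ σ) (w σ - w s)) s = fun σ => V (φ σ) (slope w s σ) := by
    funext σ
    simp only [slope_def_module, sub_self, map_zero, sub_zero,
      ContinuousLinearMap.map_smul_of_tower]
  have hmoving : HasDerivAt (fun σ => V (φ σ) (w σ - w s)) (V (φ s) w') s := by
    rw [hasDerivAt_iff_tendsto_slope, hslope]
    exact (hV.tendsto (φ s, w')).comp <|
      (hφ.continuousAt.tendsto.mono_left nhdsWithin_le_nhds).prodMk_nhds
        (hasDerivAt_iff_tendsto_slope.1 hw)
  convert hmoving.add (hVw.scomp s hφ) using 1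
  funext σ
  simp

theorem norm_integral_apply_sub_le {V : ℝ → X →L[ℂ] X} {c ω K : ℝ} (hc : 0 ≤ c) (hK : 0 ≤ K)
    (hV : ∀ r, ‖V r‖ ≤ c * Real.exp (ω * |r|)) {h : ℝ → X} (n : ℕ)
    (hh : ∀ s, ‖h s‖ ≤ (n + 1) * K * |s| ^ n * Real.exp (ω * |s|)) (t : ℝ) :
    ‖∫ s in (0 : ℝ)..t, V (t - s) (h s)‖ ≤ c * K * |t| ^ (n + 1) * Real.exp (ω * |t|) := by
  have hpt : ∀ s ∈ uIoc (0 : ℝ) t,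
      ‖V (t - s) (h s)‖ ≤ (n + 1) * (c * K * Real.exp (ω * |t|)) * |s| ^ n := by
    intro s hs
    rw [← abs_sub_add_abs_of_mem_uIcc (uIoc_subset_uIcc hs), mul_add, Real.exp_add]
    calc ‖V (t - s) (h s)‖ ≤ c * Real.exp (ω * |t - s|) * ‖h s‖ := (V _).le_of_opNorm_le (hV _) _
      _ ≤ c * Real.exp (ω * |t - s|) * ((n + 1) * K * |s| ^ n * Real.exp (ω * |s|)) := by
        gcongr; exact hh s
      _ = _ := by ring
  calc ‖∫ s in (0 : ℝ)..t, V (t - s) (h s)‖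
      ≤ |∫ s in (0 : ℝ)..t, (n + 1) * (c * K * Real.exp (ω * |t|)) * |s| ^ n| :=
        intervalIntegral.norm_integral_le_abs_of_norm_le
          ((ae_restrict_iff' measurableSet_uIoc).2 (.of_forall hpt))
          ((continuous_const.mul (continuous_abs.pow n)).intervalIntegrable 0 t)
    _ = c * K * |t| ^ (n + 1) * Real.exp (ω * |t|) := by
        rw [intervalIntegral.integral_const_mul, abs_mul, abs_intervalIntegral_abs_pow,
          abs_of_nonneg (by positivity)]
        field_simp

variable [CompleteSpace X]

/-- Duhamel's formula. -/
theorem eq_apply_add_integral_of_hasDerivAt {V : ℝ → X →L[ℂ] X}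
    (hV : Continuous fun q : ℝ × X => V q.1 q.2) (hV0 : V 0 = ContinuousLinearMap.id ℂ X)
    {Dom : Set X} {D : X → X}
    (hVderiv : ∀ r, ∀ x ∈ Dom, HasDerivAt (fun r => V r x) (Complex.I • V r (D x)) r)
    {g h : ℝ → X} (hgDom : ∀ s, g s ∈ Dom)
    (hg : ∀ s, HasDerivAt g (Complex.I • D (g s) + h s) s) (hh : Continuous h) (t : ℝ) :
    g t = V t (g 0) + ∫ s in (0 : ℝ)..t, V (t - s) (h s) := by
  have hderiv : ∀ s, HasDerivAt (fun σ => V (t - σ) (g σ)) (V (t - s) (h s)) s := by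
    intro s
    convert ((hasDerivAt_id' s).const_sub t).apply_of_continuous_uncurry hV (hg s)
      (hVderiv (t - s) (g s) (hgDom s)) using 1
    rw [map_add, map_smul, neg_one_smul]
    abel
  have hcont : Continuous fun s => V (t - s) (h s) :=
    hV.comp ((continuous_const.sub continuous_id).prodMk hh)
  rw [intervalIntegral.integral_eq_sub_of_hasDerivAt (fun s _ => hderiv s)
    (hcont.intervalIntegrable 0 t)]
  simp [hV0]

end StronglyContinuous

namespace ContinuousLinearMap

variable {X : Type*} [NormedAddCommGroup X] [NormedSpace ℂ X]

def ad (A T : X →L[ℂ] X) : X →L[ℂ] X := A.comp T - T.comp A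

variable (A : X →L[ℂ] X)

theorem ad_iterate_succ_apply (k : ℕ) (T : X →L[ℂ] X) (u : X) :
    (ad A)^[k + 1] T u = A ((ad A)^[k] T u) - (ad A)^[k] T (A u) := by
  rw [Function.iterate_succ_apply']
  rfl

theorem ad_iterate_succ_id (k : ℕ) : (ad A)^[k + 1] (ContinuousLinearMap.id ℂ X) = 0 := by
  have h0 : ad A 0 = 0 := by simp [ad]
  rw [Function.iterate_succ_apply, show ad A (ContinuousLinearMap.id ℂ X) = 0 by simp [ad],
    Function.iterate_fixed h0]

theorem ad_iterate_apply_mem {S : Submodule ℂ X} (hA : ∀ u ∈ S, A u ∈ S)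
    {T : X →L[ℂ] X} (hT : ∀ u ∈ S, T u ∈ S) (k : ℕ) {u : X} (hu : u ∈ S) :
    (ad A)^[k] T u ∈ S := by
  induction k generalizing u with
  | zero => exact hT u hu
  | succ k ih =>
    rw [ad_iterate_succ_apply]
    exact S.sub_mem (hA _ (ih hu)) (ih (hA u hu))

theorem continuous_ad_iterate_apply {V : ℝ → X →L[ℂ] X} (hV : ∀ u, Continuous fun s => V s u)
    (k : ℕ) (u : X) : Continuous fun s => (ad A)^[k] (V s) u := by
  induction k generalizing u with
  | zero => exact hV u
  | succ k ih =>
    simp only [ad_iterate_succ_apply]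
    exact (A.continuous.comp (ih u)).sub (ih (A u))

variable {A} {C : X →L[ℂ] X} {Dom : Submodule ℂ X} {D : X → X} {V : ℝ → X →L[ℂ] X}

/-- At `k = 0` the truncated index `k - 1` is harmless: its term carries the factor `k`. -/
theorem hasDerivAt_ad_iterate_apply (hDsub : ∀ u ∈ Dom, ∀ v ∈ Dom, D (u - v) = D u - D v)
    (hAdom : ∀ u ∈ Dom, A u ∈ Dom) (hC : ∀ u ∈ Dom, C u = A (D u) - D (A u))
    (hCA : ∀ u, A (C u) = C (A u)) (hVdom : ∀ t, ∀ u ∈ Dom, V t u ∈ Dom)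
    (hVderiv : ∀ t, ∀ u ∈ Dom, HasDerivAt (fun s => V s u) (Complex.I • D (V t u)) t)
    (k : ℕ) (t : ℝ) {u : X} (hu : u ∈ Dom) :
    HasDerivAt (fun s => (ad A)^[k] (V s) u)
      (Complex.I • D ((ad A)^[k] (V t) u) + (k * Complex.I) • C ((ad A)^[k - 1] (V t) u)) t := by
  induction k generalizing u with
  | zero => simpa using hVderiv t u hu
  | succ k ih =>
    convert ((A.restrictScalars ℝ).hasFDerivAt.comp_hasDerivAt t (ih hu)).sub
      (ih (hAdom u hu)) using 1
    · funext s
      exact ad_iterate_succ_apply A k (V s) u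
    set g : ℕ → X → X := fun j => (ad A)^[j] (V t)
    have hmem : ∀ j, ∀ v ∈ Dom, g j v ∈ Dom := fun j v hv =>
      ad_iterate_apply_mem A hAdom (hVdom t) j hv
    have hD : D (g (k + 1) u) = D (A (g k u)) - D (g k (A u)) := by
      rw [← hDsub _ (hAdom _ (hmem k u hu)) _ (hmem k _ (hAdom u hu))]
      exact congrArg D (ad_iterate_succ_apply A k _ u)
    have hAD : A (D (g k u)) = C (g k u) + D (A (g k u)) := by
      rw [hC _ (hmem k u hu), sub_add_cancel]
    have hCg : (k * Complex.I) • C (g k u)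
        = (k * Complex.I) • A (C (g (k - 1) u)) - (k * Complex.I) • C (g (k - 1) (A u)) := by
      rcases k with _ | k
      · simp
      · rw [hCA, ← smul_sub, ← map_sub, Nat.add_sub_cancel, ← ad_iterate_succ_apply]
    simp only [coe_restrictScalars', map_add, map_smul, Nat.add_sub_cancel]
    rw [hD, hAD, Nat.cast_succ, add_mul, one_mul, add_smul, hCg]
    module

theorem ad_iterate_succ_apply_eq_integral [CompleteSpace X]
    (hDsub : ∀ u ∈ Dom, ∀ v ∈ Dom, D (u - v) = D u - D v)
    (hAdom : ∀ u ∈ Dom, A u ∈ Dom) (hC : ∀ u ∈ Dom, C u = A (D u) - D (A u))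
    (hCA : ∀ u, A (C u) = C (A u)) (hV : Continuous fun q : ℝ × X => V q.1 q.2)
    (hV0 : V 0 = ContinuousLinearMap.id ℂ X) (hVdom : ∀ t, ∀ u ∈ Dom, V t u ∈ Dom)
    (hVderiv : ∀ t, ∀ u ∈ Dom, HasDerivAt (fun s => V s u) (Complex.I • V t (D u)) t)
    (hVD : ∀ t, ∀ u ∈ Dom, V t (D u) = D (V t u)) (k : ℕ) (t : ℝ) {u : X} (hu : u ∈ Dom) :
    (ad A)^[k + 1] (V t) u =
      ∫ s in (0 : ℝ)..t, V (t - s) (((k + 1 : ℂ) * Complex.I) • C ((ad A)^[k] (V s) u)) := by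
  have hVcont : ∀ x, Continuous fun s => V s x := fun x =>
    hV.comp (continuous_id.prodMk continuous_const)
  have hderiv (s : ℝ) := hasDerivAt_ad_iterate_apply hDsub hAdom hC hCA hVdom
    (fun t u hu => hVD t u hu ▸ hVderiv t u hu) (k + 1) s hu
  push_cast at hderiv
  rw [eq_apply_add_integral_of_hasDerivAt hV hV0 hVderiv
      (fun s => ad_iterate_apply_mem A hAdom (hVdom s) (k + 1) hu) hderiv
      ((C.continuous.comp (continuous_ad_iterate_apply A hVcont k u)).fun_const_smul _) t,
    hV0, ad_iterate_succ_id, zero_apply, map_zero, zero_add]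

end ContinuousLinearMap

theorem iterated_commutator_norm_bound_general
    {M : Type*} [MeasurableSpace M]
    (μ : Measure M)
    (m : ℕ) (p : ENNReal) [hp1 : Fact (1 ≤ p)]
    (Dom : Submodule ℂ (Lp (EuclideanSpace ℂ (Fin m)) p μ))
    (hdense : Dense (Dom : Set (Lp (EuclideanSpace ℂ (Fin m)) p μ)))
    (D : Lp (EuclideanSpace ℂ (Fin m)) p μ → Lp (EuclideanSpace ℂ (Fin m)) p μ)
    (hDadd : ∀ u ∈ Dom, ∀ v ∈ Dom, D (u + v) = D u + D v)
    (hDsmul : ∀ (a : ℂ), ∀ u ∈ Dom, D (a • u) = a • D u)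
    (V : ℝ → Lp (EuclideanSpace ℂ (Fin m)) p μ →L[ℂ]
      Lp (EuclideanSpace ℂ (Fin m)) p μ)
    (c ω : ℝ) (hc : 1 ≤ c)
    (hV0 : V 0 = ContinuousLinearMap.id ℂ _)
    (hVcont : ∀ u, Continuous fun t => V t u)
    (hVdom : ∀ t : ℝ, ∀ u ∈ Dom, V t u ∈ Dom)
    (hVderiv : ∀ t : ℝ, ∀ u ∈ Dom,
      HasDerivAt (fun s => V s u) (Complex.I • V t (D u)) t)
    (hVD : ∀ t : ℝ, ∀ u ∈ Dom, V t (D u) = D (V t u))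
    (hVbound : ∀ t : ℝ, ‖V t‖ ≤ c * Real.exp (ω * |t|))
    (L : NNReal)
    (Mη : Lp (EuclideanSpace ℂ (Fin m)) p μ →L[ℂ] Lp (EuclideanSpace ℂ (Fin m)) p μ)
    (hMηdom : ∀ u ∈ Dom, Mη u ∈ Dom)
    (Cη : Lp (EuclideanSpace ℂ (Fin m)) p μ →L[ℂ] Lp (EuclideanSpace ℂ (Fin m)) p μ)
    (hCη : ∀ u ∈ Dom, Cη u = Mη (D u) - D (Mη u))
    (hCηMη : ∀ u, Mη (Cη u) = Cη (Mη u))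
    (n : ℕ) (t : ℝ) :
    ‖(fun T => Mη.comp T - T.comp Mη)^[n] (V t)‖ ≤
      (c * |t| * ‖Cη‖) ^ n * (c * Real.exp (ω * |t|)) := by
  have hc0 : 0 ≤ c := zero_le_one.trans hc
  have hDsub : ∀ u ∈ Dom, ∀ v ∈ Dom, D (u - v) = D u - D v := fun u hu v hv => by
    rw [sub_eq_add_neg, ← neg_one_smul ℂ v, hDadd u hu _ (Dom.smul_mem _ hv), hDsmul _ v hv,
      neg_one_smul, ← sub_eq_add_neg]
  have hVjoint := continuous_uncurry_of_norm_le (by fun_prop) hVbound hVcont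
  change ‖(ContinuousLinearMap.ad Mη)^[n] (V t)‖ ≤ _
  induction n generalizing t with
  | zero => simpa using hVbound t
  | succ n ih =>
    refine ContinuousLinearMap.opNorm_le_of_dense hdense (by positivity) fun u hu => ?_
    rw [ContinuousLinearMap.ad_iterate_succ_apply_eq_integral hDsub hMηdom hCη hCηMη hVjoint hV0
      hVdom hVderiv hVD n t hu]
    refine (norm_integral_apply_sub_le hc0 (K := c ^ (n + 1) * ‖Cη‖ ^ (n + 1) * ‖u‖) (by positivity)
      hVbound n (fun s => ?_) t).trans_eq (by ring)
    rw [norm_smul, norm_mul, Complex.norm_I, mul_one]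
    calc ‖(n + 1 : ℂ)‖ * ‖Cη ((ContinuousLinearMap.ad Mη)^[n] (V s) u)‖
        ≤ (n + 1) * (‖Cη‖ * ((c * |s| * ‖Cη‖) ^ n * (c * Real.exp (ω * |s|)) * ‖u‖)) := by
          rw [← Nat.cast_succ, Complex.norm_natCast, Nat.cast_succ]
          gcongr
          exact Cη.le_opNorm_of_le
            (((ContinuousLinearMap.ad Mη)^[n] (V s)).le_of_opNorm_le (ih s) u)
      _ = _ := by ring

/-- **Norm bound for iterated commutators** (McIntosh–Morris, equation (3.6)):
`‖δⁿ(e^{itD})‖ ≤ (c|t|‖C_η‖)ⁿ c e^{ω|t|}`. -/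
theorem iterated_commutator_norm_bound
    {M : Type*} [MetricSpace M] [MeasurableSpace M] [BorelSpace M]
    (μ : Measure M) [SigmaFinite μ]
    (m : ℕ) (hm : 1 ≤ m) (p : ENNReal) [hp1 : Fact (1 ≤ p)] (hp2 : p ≠ ⊤)
    (Dom : Submodule ℂ (Lp (EuclideanSpace ℂ (Fin m)) p μ))
    (hdense : Dense (Dom : Set (Lp (EuclideanSpace ℂ (Fin m)) p μ)))
    (D : Lp (EuclideanSpace ℂ (Fin m)) p μ → Lp (EuclideanSpace ℂ (Fin m)) p μ)
    (hDadd : ∀ u ∈ Dom, ∀ v ∈ Dom, D (u + v) = D u + D v)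
    (hDsmul : ∀ (a : ℂ), ∀ u ∈ Dom, D (a • u) = a • D u)
    (V : ℝ → Lp (EuclideanSpace ℂ (Fin m)) p μ →L[ℂ]
      Lp (EuclideanSpace ℂ (Fin m)) p μ)
    (c ω : ℝ) (hc : 1 ≤ c) (hω : 0 ≤ ω)
    (hV0 : V 0 = ContinuousLinearMap.id ℂ _)
    (hVgrp : ∀ s t : ℝ, V (s + t) = (V s).comp (V t))
    (hVcont : ∀ u, Continuous fun t => V t u)
    (hVdom : ∀ t : ℝ, ∀ u ∈ Dom, V t u ∈ Dom)
    (hVderiv : ∀ t : ℝ, ∀ u ∈ Dom,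
      HasDerivAt (fun s => V s u) (Complex.I • V t (D u)) t)
    (hVD : ∀ t : ℝ, ∀ u ∈ Dom, V t (D u) = D (V t u))
    (hVbound : ∀ t : ℝ, ‖V t‖ ≤ c * Real.exp (ω * |t|))
    (η : M → ℝ) (L : NNReal) (hηLip : LipschitzWith L η) (hηbdd : ∃ C, ∀ x, |η x| ≤ C)
    (Mη : Lp (EuclideanSpace ℂ (Fin m)) p μ →L[ℂ] Lp (EuclideanSpace ℂ (Fin m)) p μ)
    (hMη : ∀ u, (Mη u : M → EuclideanSpace ℂ (Fin m))
      =ᵐ[μ] fun x => (η x : ℂ) • (u : M → EuclideanSpace ℂ (Fin m)) x)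
    (hMηdom : ∀ u ∈ Dom, Mη u ∈ Dom)
    (Cη : Lp (EuclideanSpace ℂ (Fin m)) p μ →L[ℂ] Lp (EuclideanSpace ℂ (Fin m)) p μ)
    (hCη : ∀ u ∈ Dom, Cη u = Mη (D u) - D (Mη u))
    (hCηMη : ∀ u, Mη (Cη u) = Cη (Mη u))
    (n : ℕ) (t : ℝ) :
    ‖(fun T => Mη.comp T - T.comp Mη)^[n] (V t)‖ ≤
      (c * |t| * ‖Cη‖) ^ n * (c * Real.exp (ω * |t|)) :=
  iterated_commutator_norm_bound_general μ m p (hp1 := hp1) Dom hdense D hDadd hDsmul V c ω hc hV0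
    hVcont hVdom hVderiv hVD hVbound L Mη hMηdom Cη hCη hCηMη n t
end

section
/- Let (M,d) be a metric space with a σ-finite Borel measure μ, let m ≥ 1, 1 ≤ p < ∞, and write X = L^p(μ;ℂ^m). Let D : Dom(D) ⊆ X → X be a densely defined linear operator and let V : ℝ → B(X) be a C₀ group generated by iD satisfying ‖V(t)‖ ≤ c·e^{ω|t|} for all t ∈ ℝ, for some c ≥ 1 and ω ≥ 0. Let K ⊆ M, let u ∈ X vanish μ-a.e. on M∖K, and let t ∈ ℝ. Suppose η : M → ℝ is a bounded Lipschitz function with η(x) = 1 for all x ∈ K, such that η·w ∈ Dom(D) for all w ∈ Dom(D), the operator C_η ∈ B(X) satisfies C_η w = η·(Dw) − D(η·w) for all w ∈ Dom(D), C_η commutes with M_η, and c·|t|·‖C_η‖ < 1. Then V(t)u vanishes μ-a.e. on the complement of the support of η, i.e. V(t)u = 0 μ-a.e. on the open set of points possessing a neighbourhood on which η vanishes identically. -/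
/-!
Put `B = 1 - M_η`, so that `B u = 0` and `C_η = [D, B]` commutes with `B`. Differentiating
`s ↦ V(t - s) M_η V(s) w` gives the Duhamel formula `[B, V(t)] = -i ∫₀ᵗ V(t - s) C_η V(s) ds`,
and since `ad_B` is a derivation commuting with `C_η`, iterating it yields integral formulas for
`ad_B^n V(t)` with norm at most `c e^{ω|t|} (c |t| ‖C_η‖)ⁿ`. As `B u = 0`,
`Bⁿ V(t) u = ad_B^n V(t) u → 0` in `L^p`; but `Bⁿ` is multiplication by `(1 - η)ⁿ`, which is `1`
where `η` vanishes, so `V(t) u` vanishes there.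
-/

open MeasureTheory Complex Finset Filter Topology

theorem abs_sub_add_abs_of_mem_uIoc {s r : ℝ} (hr : r ∈ Set.uIoc 0 s) : |s - r| + |r| = |s| := by
  rw [← (abs_add_eq_add_abs_iff _ _).2, sub_add_cancel]
  rcases Set.mem_uIoc.1 hr with ⟨h0r, hrs⟩ | ⟨hsr, hr0⟩
  · exact Or.inl ⟨by linarith, h0r.le⟩
  · exact Or.inr ⟨by linarith, hr0⟩

section IteratedCommutator

variable {X : Type*} [NormedAddCommGroup X] [NormedSpace ℂ X]

/-- This is `ad_B^n (V s)` whenever `[B, V s] = iteratedCommutator V C 1 s` and `[B, C] = 0`: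
the binomial sum is the Leibniz rule for the derivation `ad_B`. -/
noncomputable def iteratedCommutator (V : ℝ → X →L[ℂ] X) (C : X →L[ℂ] X) : ℕ → ℝ → X → X
  | 0, s, w => V s w
  | n + 1, s, w => (-I) • ∫ r in (0 : ℝ)..s, ∑ ij ∈ (antidiagonal n).attach,
      n.choose ij.1.1 •
        iteratedCommutator V C ij.1.1 (s - r) (C (iteratedCommutator V C ij.1.2 r w))
  decreasing_by all_goals (have := mem_antidiagonal.1 ij.2; omega)

variable (V : ℝ → X →L[ℂ] X) (C : X →L[ℂ] X)

theorem iteratedCommutator_zero (s : ℝ) (w : X) : iteratedCommutator V C 0 s w = V s w := by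
  rw [iteratedCommutator]

theorem iteratedCommutator_succ (n : ℕ) (s : ℝ) (w : X) :
    iteratedCommutator V C (n + 1) s w = (-I) • ∫ r in (0 : ℝ)..s, ∑ ij ∈ antidiagonal n,
      n.choose ij.1 •
        iteratedCommutator V C ij.1 (s - r) (C (iteratedCommutator V C ij.2 r w)) := by
  rw [iteratedCommutator]
  congr 1
  refine intervalIntegral.integral_congr fun r _ => ?_
  exact sum_attach (antidiagonal n) fun ij =>
    n.choose ij.1 • iteratedCommutator V C ij.1 (s - r) (C (iteratedCommutator V C ij.2 r w))

variable {V C}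

theorem norm_iteratedCommutator_le {c ω : ℝ} (hc : 0 ≤ c)
    (hVb : ∀ s, ‖V s‖ ≤ c * Real.exp (ω * |s|)) (n : ℕ) (s : ℝ) (w : X) :
    ‖iteratedCommutator V C n s w‖ ≤ c * Real.exp (ω * |s|) * (c * ‖C‖ * |s|) ^ n * ‖w‖ := by
  induction n using Nat.strong_induction_on generalizing s w with
  | _ n ih =>
    obtain _ | k := n
    · simpa only [iteratedCommutator_zero, pow_zero, mul_one]
        using (V s).le_of_opNorm_le (hVb s) w
    set A := c * Real.exp (ω * |s|) * (c * ‖C‖) ^ (k + 1) * ‖w‖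
    have hterm : ∀ r ∈ Set.uIoc 0 s, ∀ ij ∈ antidiagonal k,
        ‖iteratedCommutator V C ij.1 (s - r) (C (iteratedCommutator V C ij.2 r w))‖ ≤
          A * (|s - r| ^ ij.1 * |r| ^ ij.2) := by
      intro r hr ij hij
      have hij := mem_antidiagonal.1 hij
      calc _ ≤ c * Real.exp (ω * |s - r|) * (c * ‖C‖ * |s - r|) ^ ij.1 *
              (‖C‖ * (c * Real.exp (ω * |r|) * (c * ‖C‖ * |r|) ^ ij.2 * ‖w‖)) := by
            refine (ih _ (by omega) _ _).trans ?_
            gcongr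
            exact C.le_opNorm_of_le (ih _ (by omega) _ _)
        _ = c * Real.exp (ω * (|s - r| + |r|)) * (c * ‖C‖) ^ (ij.1 + ij.2 + 1) * ‖w‖ *
              (|s - r| ^ ij.1 * |r| ^ ij.2) := by
            rw [mul_add, Real.exp_add]; ring
        _ = A * (|s - r| ^ ij.1 * |r| ^ ij.2) := by
            rw [abs_sub_add_abs_of_mem_uIoc hr, hij]
    have hsum : ∀ r ∈ Set.uIoc 0 s, ‖∑ ij ∈ antidiagonal k,
        k.choose ij.1 • iteratedCommutator V C ij.1 (s - r) (C (iteratedCommutator V C ij.2 r w))‖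
          ≤ A * |s| ^ k := by
      intro r hr
      calc _ ≤ ∑ ij ∈ antidiagonal k, (k.choose ij.1 : ℝ) * (A * (|s - r| ^ ij.1 * |r| ^ ij.2)) :=
            (norm_sum_le _ _).trans <| sum_le_sum fun ij hij =>
              norm_nsmul_le.trans (by gcongr; exact hterm r hr ij hij)
        _ = A * (|s - r| + |r|) ^ k := by
            rw [(Commute.all _ _).add_pow', mul_sum]
            exact sum_congr rfl fun ij _ => by rw [nsmul_eq_mul]; ring
        _ = A * |s| ^ k := by rw [abs_sub_add_abs_of_mem_uIoc hr]
    calc _ ≤ A * |s| ^ k * |s - 0| := by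
          rw [iteratedCommutator_succ, norm_smul, norm_neg, norm_I, one_mul]
          exact intervalIntegral.norm_integral_le_of_norm_le_const hsum
      _ = _ := by rw [sub_zero]; ring

theorem tendsto_iteratedCommutator_atTop_zero {c ω : ℝ} (hc : 0 ≤ c)
    (hVb : ∀ s, ‖V s‖ ≤ c * Real.exp (ω * |s|)) {s : ℝ} (hs : c * ‖C‖ * |s| < 1) (w : X) :
    Tendsto (fun n => iteratedCommutator V C n s w) atTop (𝓝 0) := by
  refine squeeze_zero_norm (norm_iteratedCommutator_le hc hVb · s w) ?_
  simpa using ((tendsto_pow_atTop_nhds_zero_of_lt_one (by positivity) hs).const_mul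
    (c * Real.exp (ω * |s|))).mul_const ‖w‖

section

variable (hV : Continuous fun q : ℝ × X => V q.1 q.2)
include hV

theorem continuous_iteratedCommutator (n : ℕ) :
    Continuous fun q : ℝ × X => iteratedCommutator V C n q.1 q.2 := by
  induction n using Nat.strong_induction_on with
  | _ n ih =>
    obtain _ | k := n
    · simpa only [iteratedCommutator_zero] using hV
    have hterm : ∀ ij ∈ antidiagonal k, Continuous fun p : (ℝ × X) × ℝ =>
        iteratedCommutator V C ij.1 (p.1.1 - p.2) (C (iteratedCommutator V C ij.2 p.2 p.1.2)) := by
      intro ij hij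
      obtain ⟨hi, hj⟩ : ij.1 < k + 1 ∧ ij.2 < k + 1 := by
        have := mem_antidiagonal.1 hij; omega
      exact (ih _ hi).comp ((by fun_prop : Continuous fun p : (ℝ × X) × ℝ => p.1.1 - p.2).prodMk
        (C.continuous.comp ((ih _ hj).comp (continuous_snd.prodMk (by fun_prop)))))
    simp only [iteratedCommutator_succ]
    refine (intervalIntegral.continuous_parametric_intervalIntegral_of_continuous
      (continuous_finsetSum _ fun ij hij => ?_) continuous_fst).const_smul _
    exact (hterm ij hij).const_smul (k.choose ij.1)

theorem intervalIntegrable_iteratedCommutator_integrand (n : ℕ) (s : ℝ) (w : X) :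
    IntervalIntegrable (fun r => ∑ ij ∈ antidiagonal n,
      n.choose ij.1 • iteratedCommutator V C ij.1 (s - r) (C (iteratedCommutator V C ij.2 r w)))
      volume 0 s := by
  refine Continuous.intervalIntegrable (continuous_finsetSum _ fun ij _ => ?_) _ _
  exact ((continuous_iteratedCommutator hV ij.1).comp ((continuous_const.sub continuous_id).prodMk
    (C.continuous.comp ((continuous_iteratedCommutator hV ij.2).comp
      (continuous_id.prodMk continuous_const))))).const_smul (n.choose ij.1)

theorem iteratedCommutator_add (n : ℕ) (s : ℝ) (w w' : X) :
    iteratedCommutator V C n s (w + w') =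
      iteratedCommutator V C n s w + iteratedCommutator V C n s w' := by
  induction n using Nat.strong_induction_on generalizing s w w' with
  | _ n ih =>
    obtain _ | k := n
    · simp only [iteratedCommutator_zero, map_add]
    rw [iteratedCommutator_succ, iteratedCommutator_succ, iteratedCommutator_succ, ← smul_add,
      ← intervalIntegral.integral_add (intervalIntegrable_iteratedCommutator_integrand hV k s w)
        (intervalIntegrable_iteratedCommutator_integrand hV k s w')]
    congr 1
    refine intervalIntegral.integral_congr fun r _ => ?_
    rw [← sum_add_distrib]
    refine sum_congr rfl fun ij hij => ?_
    have hij := mem_antidiagonal.1 hij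
    rw [ih ij.2 (by omega), map_add, ih ij.1 (by omega), smul_add]

theorem iteratedCommutator_apply_zero (n : ℕ) (s : ℝ) : iteratedCommutator V C n s 0 = 0 := by
  simpa using iteratedCommutator_add (C := C) hV n s 0 0

theorem map_iteratedCommutator [CompleteSpace X] {B : X →L[ℂ] X} (hBC : ∀ x, B (C x) = C (B x))
    (hBV : ∀ s w, B (V s w) = V s (B w) + iteratedCommutator V C 1 s w) (n : ℕ) (s : ℝ) (w : X) :
    B (iteratedCommutator V C n s w) =
      iteratedCommutator V C n s (B w) + iteratedCommutator V C (n + 1) s w := by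
  induction n using Nat.strong_induction_on generalizing s w with
  | _ n ih =>
    obtain _ | k := n
    · simpa only [iteratedCommutator_zero] using hBV s w
    have hpoint : ∀ r, B (∑ ij ∈ antidiagonal k, k.choose ij.1 •
          iteratedCommutator V C ij.1 (s - r) (C (iteratedCommutator V C ij.2 r w))) =
        ∑ ij ∈ antidiagonal k, k.choose ij.1 •
          iteratedCommutator V C ij.1 (s - r) (C (iteratedCommutator V C ij.2 r (B w))) +
        ∑ ij ∈ antidiagonal (k + 1), (k + 1).choose ij.1 •
          iteratedCommutator V C ij.1 (s - r) (C (iteratedCommutator V C ij.2 r w)) := by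
      intro r
      rw [sum_antidiagonal_choose_succ_nsmul
        (fun i j => iteratedCommutator V C i (s - r) (C (iteratedCommutator V C j r w))),
        map_sum, ← sum_add_distrib, ← sum_add_distrib]
      refine sum_congr rfl fun ij hij => ?_
      have hij := mem_antidiagonal.1 hij
      rw [map_nsmul, ih ij.1 (by omega), hBC, ih ij.2 (by omega), map_add,
        iteratedCommutator_add hV, ← Nat.choose_symm_of_eq_add hij.symm, smul_add, smul_add]
      abel
    rw [iteratedCommutator_succ, map_smul,
      ← B.intervalIntegral_comp_comm (intervalIntegrable_iteratedCommutator_integrand hV k s w),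
      intervalIntegral.integral_congr fun r _ => hpoint r,
      intervalIntegral.integral_add (intervalIntegrable_iteratedCommutator_integrand hV k s (B w))
        (intervalIntegrable_iteratedCommutator_integrand hV (k + 1) s w),
      smul_add, ← iteratedCommutator_succ, ← iteratedCommutator_succ]

theorem pow_apply_eq_iteratedCommutator [CompleteSpace X] {B : X →L[ℂ] X}
    (hBC : ∀ x, B (C x) = C (B x))
    (hBV : ∀ s w, B (V s w) = V s (B w) + iteratedCommutator V C 1 s w)
    {w : X} (hBw : B w = 0) (n : ℕ) (s : ℝ) :
    (B ^ n) (V s w) = iteratedCommutator V C n s w := by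
  induction n with
  | zero => rw [pow_zero, one_apply_eq_self, iteratedCommutator_zero]
  | succ n ih =>
    rw [pow_succ', mul_apply_eq_comp, ih, map_iteratedCommutator hV hBC hBV, hBw,
      iteratedCommutator_apply_zero hV, zero_add]

end

end IteratedCommutator

section Group

variable {X : Type*} [NormedAddCommGroup X] [NormedSpace ℂ X] {V : ℝ → X →L[ℂ] X}

theorem continuous_uncurry_of_norm_le_exp {c ω : ℝ} (hVc : ∀ w, Continuous fun s => V s w)
    (hVb : ∀ s, ‖V s‖ ≤ c * Real.exp (ω * |s|)) : Continuous fun q : ℝ × X => V q.1 q.2 := by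
  refine continuous_iff_continuousAt.2 fun q => ?_
  set K := c * Real.exp (|ω| * (|q.1| + 1))
  have hlip : ∀ s ∈ Set.Ioo (q.1 - 1) (q.1 + 1), LipschitzWith K.toNNReal (V s) := by
    intro s hs
    have hc : 0 ≤ c := by simpa using (norm_nonneg _).trans (hVb 0)
    have hsq : |s - q.1| < 1 := abs_sub_lt_iff.2 ⟨by linarith [hs.2], by linarith [hs.1]⟩
    refine (V s).lipschitz.weaken ?_
    rw [← NNReal.coe_le_coe, coe_nnnorm]
    refine (hVb s).trans (le_trans ?_ (Real.le_coe_toNNReal _))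
    show _ ≤ c * Real.exp (|ω| * (|q.1| + 1))
    gcongr
    · exact le_abs_self ω
    · linarith [abs_sub_abs_le_abs_sub s q.1]
  exact (continuousOn_prod_of_continuousOn_lipschitzOnWith' _ K.toNNReal
    (fun s hs => (hlip s hs).lipschitzOnWith) fun w _ => (hVc w).continuousOn).continuousAt
    (prod_mem_nhds (Ioo_mem_nhds (by linarith) (by linarith)) univ_mem)

theorem hasDerivAt_apply_sub (hV : Continuous fun q : ℝ × X => V q.1 q.2)
    {h : ℝ → X} {d e : X} {s T : ℝ} (hh : HasDerivAt h d s)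
    (he : HasDerivAt (fun a => V a (h s)) e (T - s)) :
    HasDerivAt (fun r => V (T - r) (h r)) (V (T - s) d - e) s := by
  have hfixed : HasDerivAt (fun r => V (T - r) (h s)) (-e) s := by
    simpa [Function.comp_def] using he.scomp s ((hasDerivAt_id s).const_sub T)
  have hmoving : HasDerivAt (fun r => V (T - r) (h r - h s)) (V (T - s) d) s := by
    rw [hasDerivAt_iff_tendsto_slope] at hh ⊢
    have hT : Tendsto (fun r => T - r) (𝓝[≠] s) (𝓝 (T - s)) :=
      ((continuous_const.sub continuous_id).tendsto s).mono_left nhdsWithin_le_nhds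
    refine ((hV.tendsto (T - s, d)).comp (hT.prodMk_nhds hh)).congr fun r => ?_
    simp only [Function.comp_apply, slope_def_module, sub_self, map_zero, sub_zero,
      ContinuousLinearMap.map_smul_of_tower]
  convert hmoving.add hfixed using 1
  · ext r
    simp
  · rw [sub_eq_add_neg]

variable [CompleteSpace X]

theorem apply_sub_apply_eq_iteratedCommutator_one_of_mem {Dom : Set X} {D : X → X}
    {M C : X →L[ℂ] X} (hV : Continuous fun q : ℝ × X => V q.1 q.2)
    (hV0 : V 0 = ContinuousLinearMap.id ℂ X) (hVdom : ∀ t, ∀ w ∈ Dom, V t w ∈ Dom)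
    (hVderiv : ∀ t, ∀ w ∈ Dom, HasDerivAt (fun s => V s w) (I • V t (D w)) t)
    (hVD : ∀ t, ∀ w ∈ Dom, V t (D w) = D (V t w))
    (hMdom : ∀ w ∈ Dom, M w ∈ Dom) (hC : ∀ w ∈ Dom, C w = M (D w) - D (M w))
    {w : X} (hw : w ∈ Dom) (T : ℝ) :
    V T (M w) - M (V T w) = iteratedCommutator V C 1 T w := by
  have hderiv : ∀ s, HasDerivAt (fun r => V (T - r) (M (V r w))) (I • V (T - s) (C (V s w))) s := by
    intro s
    have hVs := hVdom s w hw
    have hM : HasDerivAt (fun r => M (V r w)) (M (I • V s (D w))) s :=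
      (M.restrictScalars ℝ).hasFDerivAt.comp_hasDerivAt s (hVderiv s w hw)
    refine (hasDerivAt_apply_sub hV hM (hVderiv _ _ (hMdom _ hVs))).congr_deriv ?_
    rw [hC _ hVs, hVD s w hw, map_smul, map_smul, map_sub, smul_sub]
  have hcont : Continuous fun s => I • V (T - s) (C (V s w)) :=
    (hV.comp ((continuous_const.sub continuous_id).prodMk
      (C.continuous.comp (hV.comp (continuous_id.prodMk continuous_const))))).const_smul I
  have hFTC := intervalIntegral.integral_eq_sub_of_hasDerivAt (fun s _ => hderiv s)
    (hcont.intervalIntegrable 0 T)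
  simp only [sub_self, sub_zero, hV0, ContinuousLinearMap.id_apply] at hFTC
  rw [iteratedCommutator_succ, ← neg_sub, ← hFTC, intervalIntegral.integral_smul]
  simp [iteratedCommutator_zero]

theorem apply_sub_apply_eq_iteratedCommutator_one {Dom : Set X} {D : X → X}
    {M C : X →L[ℂ] X} (hV : Continuous fun q : ℝ × X => V q.1 q.2)
    (hV0 : V 0 = ContinuousLinearMap.id ℂ X) (hVdom : ∀ t, ∀ w ∈ Dom, V t w ∈ Dom)
    (hVderiv : ∀ t, ∀ w ∈ Dom, HasDerivAt (fun s => V s w) (I • V t (D w)) t)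
    (hVD : ∀ t, ∀ w ∈ Dom, V t (D w) = D (V t w)) (hdense : Dense Dom)
    (hMdom : ∀ w ∈ Dom, M w ∈ Dom) (hC : ∀ w ∈ Dom, C w = M (D w) - D (M w)) (T : ℝ) (w : X) :
    V T (M w) - M (V T w) = iteratedCommutator V C 1 T w := by
  refine congrFun (Continuous.ext_on hdense
    (((V T).continuous.comp M.continuous).sub (M.continuous.comp (V T).continuous))
    ((continuous_iteratedCommutator hV 1).comp (continuous_const.prodMk continuous_id))
    fun w hw => ?_) w
  exact apply_sub_apply_eq_iteratedCommutator_one_of_mem hV hV0 hVdom hVderiv hVD hMdom hC hw T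

end Group

section Lp

variable {α E : Type*} [MeasurableSpace α] {μ : Measure α} [NormedAddCommGroup E]
  {p : ENNReal} [Fact (1 ≤ p)]

theorem ae_eq_zero_of_tendsto_of_ae_eq {F : ℕ → Lp E p μ} (hF : Tendsto F atTop (𝓝 0))
    {f : α → E} {S : Set α} (hFf : ∀ n, ∀ᵐ x ∂μ, x ∈ S → F n x = f x) :
    ∀ᵐ x ∂μ, x ∈ S → f x = 0 := by
  obtain ⟨ns, -, hns⟩ := (tendstoInMeasure_of_tendsto_Lp hF).exists_seq_tendsto_ae
  filter_upwards [hns, ae_all_iff.2 hFf, Lp.coeFn_zero E p μ] with x hx hxf hx0 hxS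
  rw [hx0] at hx
  exact tendsto_nhds_unique tendsto_const_nhds (hx.congr fun i => hxf (ns i) hxS)

variable [NormedSpace ℂ E]

theorem pow_apply_ae_eq_smul {M : Lp E p μ →L[ℂ] Lp E p μ} {g : α → ℂ}
    (hM : ∀ w, M w =ᵐ[μ] fun x => g x • w x) (n : ℕ) (w : Lp E p μ) :
    (M ^ n) w =ᵐ[μ] fun x => g x ^ n • w x := by
  induction n with
  | zero => simp
  | succ n ih =>
    rw [pow_succ', mul_apply_eq_comp]
    filter_upwards [hM ((M ^ n) w), ih] with x hx hn
    rw [hx, hn, smul_smul, pow_succ']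

theorem one_sub_apply_ae_eq_smul {M : Lp E p μ →L[ℂ] Lp E p μ} {g : α → ℂ}
    (hM : ∀ w, M w =ᵐ[μ] fun x => g x • w x) (w : Lp E p μ) :
    (1 - M) w =ᵐ[μ] fun x => (1 - g x) • w x := by
  filter_upwards [Lp.coeFn_sub w (M w), hM w] with x hx hxM
  rw [sub_apply, one_apply_eq_self, hx, Pi.sub_apply, hxM, sub_smul, one_smul]

theorem apply_eq_zero_of_ae_eq_smul {M : Lp E p μ →L[ℂ] Lp E p μ} {g : α → ℂ}
    (hM : ∀ w, M w =ᵐ[μ] fun x => g x • w x) {K : Set α} (hgK : ∀ x ∈ K, g x = 0)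
    {w : Lp E p μ} (hw : ∀ᵐ x ∂μ, x ∉ K → w x = 0) : M w = 0 := by
  refine Lp.eq_zero_iff_ae_eq_zero.2 ?_
  filter_upwards [hM w, hw] with x hx hxK
  by_cases hK : x ∈ K
  · simp [hx, hgK x hK]
  · simp [hx, hxK hK]

end Lp

theorem group_vanishes_outside_support_general
    {M : Type*} [MetricSpace M] [MeasurableSpace M]
    (μ : Measure M)
    (m : ℕ) (p : ENNReal) [hp1 : Fact (1 ≤ p)]
    (Dom : Submodule ℂ (Lp (EuclideanSpace ℂ (Fin m)) p μ))
    (hdense : Dense (Dom : Set (Lp (EuclideanSpace ℂ (Fin m)) p μ)))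
    (D : Lp (EuclideanSpace ℂ (Fin m)) p μ → Lp (EuclideanSpace ℂ (Fin m)) p μ)
    (V : ℝ → Lp (EuclideanSpace ℂ (Fin m)) p μ →L[ℂ]
      Lp (EuclideanSpace ℂ (Fin m)) p μ)
    (c ω : ℝ) (hc : 1 ≤ c)
    (hV0 : V 0 = ContinuousLinearMap.id ℂ _)
    (hVcont : ∀ u, Continuous fun t => V t u)
    (hVdom : ∀ t : ℝ, ∀ u ∈ Dom, V t u ∈ Dom)
    (hVderiv : ∀ t : ℝ, ∀ u ∈ Dom,
      HasDerivAt (fun s => V s u) (Complex.I • V t (D u)) t)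
    (hVD : ∀ t : ℝ, ∀ u ∈ Dom, V t (D u) = D (V t u))
    (hVbound : ∀ t : ℝ, ‖V t‖ ≤ c * Real.exp (ω * |t|))
    (K : Set M)
    (u : Lp (EuclideanSpace ℂ (Fin m)) p μ)
    (hu : ∀ᵐ x ∂μ, x ∉ K → (u : M → EuclideanSpace ℂ (Fin m)) x = 0)
    (t : ℝ)
    (η : M → ℝ) (L : NNReal)
    (hηK : ∀ x ∈ K, η x = 1)
    (Mη : Lp (EuclideanSpace ℂ (Fin m)) p μ →L[ℂ] Lp (EuclideanSpace ℂ (Fin m)) p μ)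
    (hMη : ∀ w, (Mη w : M → EuclideanSpace ℂ (Fin m))
      =ᵐ[μ] fun x => (η x : ℂ) • (w : M → EuclideanSpace ℂ (Fin m)) x)
    (hMηdom : ∀ w ∈ Dom, Mη w ∈ Dom)
    (Cη : Lp (EuclideanSpace ℂ (Fin m)) p μ →L[ℂ] Lp (EuclideanSpace ℂ (Fin m)) p μ)
    (hCη : ∀ w ∈ Dom, Cη w = Mη (D w) - D (Mη w))
    (hCηMη : ∀ w, Mη (Cη w) = Cη (Mη w))
    (hsmall : c * |t| * ‖Cη‖ < 1) :
    ∀ᵐ x ∂μ, x ∉ closure (Function.support η) →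
      (V t u : M → EuclideanSpace ℂ (Fin m)) x = 0 := by
  have hV := continuous_uncurry_of_norm_le_exp hVcont hVbound
  set B := 1 - Mη
  have hBV : ∀ s w, B (V s w) = V s (B w) + iteratedCommutator V Cη 1 s w := fun s w => by
    rw [← apply_sub_apply_eq_iteratedCommutator_one hV hV0 hVdom hVderiv hVD hdense hMηdom hCη]
    simp only [B, sub_apply, one_apply_eq_self, map_sub]
    abel
  have hBC : ∀ w, B (Cη w) = Cη (B w) := fun w => by
    simp only [B, sub_apply, one_apply_eq_self, map_sub, hCηMη]
  have hB := one_sub_apply_ae_eq_smul hMη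
  have hBu : B u = 0 := apply_eq_zero_of_ae_eq_smul hB (fun x hx => by simp [hηK x hx]) hu
  have hlim : Tendsto (fun n => (B ^ n) (V t u)) atTop (𝓝 0) := by
    simp_rw [pow_apply_eq_iteratedCommutator hV hBC hBV hBu]
    exact tendsto_iteratedCommutator_atTop_zero (by linarith) hVbound (by linarith) u
  refine (ae_eq_zero_of_tendsto_of_ae_eq hlim (S := {x | η x = 0}) fun n => ?_).mono
    fun x hx hxη => hx (Function.notMem_support.1 fun h => hxη (subset_closure h))
  filter_upwards [pow_apply_ae_eq_smul hB n (V t u)] with x hx hxη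
  rw [hx, hxη]
  simp

/-- **Key step in the proof of finite propagation speed** (McIntosh–Morris, proof of
Theorem 3.1): if `η ≡ 1` on `K`, `u` is supported in `K` and `c|t|‖C_η‖ < 1`, then
`e^{itD}u` vanishes a.e. outside the support of `η`. -/
theorem group_vanishes_outside_support
    {M : Type*} [MetricSpace M] [MeasurableSpace M] [BorelSpace M]
    (μ : Measure M) [SigmaFinite μ]
    (m : ℕ) (hm : 1 ≤ m) (p : ENNReal) [hp1 : Fact (1 ≤ p)] (hp2 : p ≠ ⊤)
    (Dom : Submodule ℂ (Lp (EuclideanSpace ℂ (Fin m)) p μ))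
    (hdense : Dense (Dom : Set (Lp (EuclideanSpace ℂ (Fin m)) p μ)))
    (D : Lp (EuclideanSpace ℂ (Fin m)) p μ → Lp (EuclideanSpace ℂ (Fin m)) p μ)
    (hDadd : ∀ u ∈ Dom, ∀ v ∈ Dom, D (u + v) = D u + D v)
    (hDsmul : ∀ (a : ℂ), ∀ u ∈ Dom, D (a • u) = a • D u)
    (V : ℝ → Lp (EuclideanSpace ℂ (Fin m)) p μ →L[ℂ]
      Lp (EuclideanSpace ℂ (Fin m)) p μ)
    (c ω : ℝ) (hc : 1 ≤ c) (hω : 0 ≤ ω)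
    (hV0 : V 0 = ContinuousLinearMap.id ℂ _)
    (hVgrp : ∀ s t : ℝ, V (s + t) = (V s).comp (V t))
    (hVcont : ∀ u, Continuous fun t => V t u)
    (hVdom : ∀ t : ℝ, ∀ u ∈ Dom, V t u ∈ Dom)
    (hVderiv : ∀ t : ℝ, ∀ u ∈ Dom,
      HasDerivAt (fun s => V s u) (Complex.I • V t (D u)) t)
    (hVD : ∀ t : ℝ, ∀ u ∈ Dom, V t (D u) = D (V t u))
    (hVbound : ∀ t : ℝ, ‖V t‖ ≤ c * Real.exp (ω * |t|))
    (K : Set M)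
    (u : Lp (EuclideanSpace ℂ (Fin m)) p μ)
    (hu : ∀ᵐ x ∂μ, x ∉ K → (u : M → EuclideanSpace ℂ (Fin m)) x = 0)
    (t : ℝ)
    (η : M → ℝ) (L : NNReal) (hηLip : LipschitzWith L η) (hηbdd : ∃ C, ∀ x, |η x| ≤ C)
    (hηK : ∀ x ∈ K, η x = 1)
    (Mη : Lp (EuclideanSpace ℂ (Fin m)) p μ →L[ℂ] Lp (EuclideanSpace ℂ (Fin m)) p μ)
    (hMη : ∀ w, (Mη w : M → EuclideanSpace ℂ (Fin m))
      =ᵐ[μ] fun x => (η x : ℂ) • (w : M → EuclideanSpace ℂ (Fin m)) x)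
    (hMηdom : ∀ w ∈ Dom, Mη w ∈ Dom)
    (Cη : Lp (EuclideanSpace ℂ (Fin m)) p μ →L[ℂ] Lp (EuclideanSpace ℂ (Fin m)) p μ)
    (hCη : ∀ w ∈ Dom, Cη w = Mη (D w) - D (Mη w))
    (hCηMη : ∀ w, Mη (Cη w) = Cη (Mη w))
    (hsmall : c * |t| * ‖Cη‖ < 1) :
    ∀ᵐ x ∂μ, x ∉ closure (Function.support η) →
      (V t u : M → EuclideanSpace ℂ (Fin m)) x = 0 :=
  group_vanishes_outside_support_general μ m p (hp1 := hp1) Dom hdense D V c ω hc hV0 hVcont hVdom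
    hVderiv hVD hVbound K u hu t η L hηK Mη hMη hMηdom Cη hCη hCηMη hsmall
end

section
/- Let H be a complex Hilbert space, let B ∈ B(H) be a self-adjoint bounded operator satisfying ⟨Bu,u⟩ ≥ λ‖u‖² for all u ∈ H, for some λ > 0 (so B is invertible in B(H)), and let D : Dom(D) ⊆ H → H be a densely defined self-adjoint operator. Define a new inner product on H by ⟨u,v⟩_B := ⟨B⁻¹u, v⟩. Then ⟨·,·⟩_B is an inner product whose associated norm ‖u‖_B = ⟨u,u⟩_B^{1/2} is equivalent to the original norm, with ‖B‖^{−1/2}‖u‖ ≤ ‖u‖_B ≤ λ^{−1/2}‖u‖ for all u ∈ H, so (H, ⟨·,·⟩_B) is a Hilbert space; and the operator BD with domain Dom(BD) = Dom(D), u ↦ B(Du), is self-adjoint as a densely defined operator on the Hilbert space (H, ⟨·,·⟩_B). -/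
open Complex

/-- **Self-adjointness of `BD` in the `B`-inner product** (McIntosh–Morris, Case II of
Section 4): if `B` is bounded, self-adjoint and strictly positive, and `D` is
densely defined self-adjoint, then `⟨u,v⟩_B := ⟨B⁻¹u, v⟩` is an inner product whose
norm is equivalent to the original one, and `BD` is self-adjoint on `(H, ⟨·,·⟩_B)`. -/
theorem BD_selfAdjoint_in_B_inner_product
    {H : Type*} [NormedAddCommGroup H] [InnerProductSpace ℂ H] [CompleteSpace H]
    (B : H →L[ℂ] H) (hBsa : IsSelfAdjoint B)
    (lam : ℝ) (hlam : 0 < lam)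
    (hBpos : ∀ u : H, lam * ‖u‖ ^ 2 ≤ (inner (𝕜 := ℂ) (B u) u).re)
    (Dom : Submodule ℂ H) (hdense : Dense (Dom : Set H))
    (D : H → H)
    (hDadd : ∀ u ∈ Dom, ∀ v ∈ Dom, D (u + v) = D u + D v)
    (hDsmul : ∀ (a : ℂ), ∀ u ∈ Dom, D (a • u) = a • D u)
    -- `D` is self-adjoint: symmetric with maximal domain
    (hDsym : ∀ u ∈ Dom, ∀ v ∈ Dom, inner (𝕜 := ℂ) (D u) v = inner (𝕜 := ℂ) u (D v))
    (hDmax : ∀ v : H, (∃ w : H, ∀ u ∈ Dom, inner (𝕜 := ℂ) (D u) v = inner (𝕜 := ℂ) u w) →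
      v ∈ Dom) :
    ∃ Binv : H →L[ℂ] H,
      -- `B` is invertible in `B(H)`
      Binv.comp B = ContinuousLinearMap.id ℂ H ∧
      B.comp Binv = ContinuousLinearMap.id ℂ H ∧
      -- `⟨u,v⟩_B := ⟨B⁻¹u, v⟩` is an inner product:
      (∀ u v : H, inner (𝕜 := ℂ) (Binv v) u = starRingEnd ℂ (inner (𝕜 := ℂ) (Binv u) v)) ∧
      (∀ u v w : H, inner (𝕜 := ℂ) (Binv u) (v + w) =
        inner (𝕜 := ℂ) (Binv u) v + inner (𝕜 := ℂ) (Binv u) w) ∧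
      (∀ (a : ℂ) (u v : H), inner (𝕜 := ℂ) (Binv u) (a • v) =
        a * inner (𝕜 := ℂ) (Binv u) v) ∧
      (∀ u : H, 0 ≤ (inner (𝕜 := ℂ) (Binv u) u).re ∧
        (inner (𝕜 := ℂ) (Binv u) u).im = 0 ∧
        ((inner (𝕜 := ℂ) (Binv u) u) = 0 ↔ u = 0)) ∧
      -- norm equivalence: `‖B‖⁻¹‖u‖² ≤ ‖u‖_B² ≤ λ⁻¹‖u‖²`
      (∀ u : H, ‖u‖ ^ 2 ≤ ‖B‖ * (inner (𝕜 := ℂ) (Binv u) u).re ∧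
        (inner (𝕜 := ℂ) (Binv u) u).re ≤ lam⁻¹ * ‖u‖ ^ 2) ∧
      -- `BD` is self-adjoint for `⟨·,·⟩_B`: symmetric and with maximal domain
      (∀ u ∈ Dom, ∀ v ∈ Dom,
        inner (𝕜 := ℂ) (Binv (B (D u))) v = inner (𝕜 := ℂ) (Binv u) (B (D v))) ∧
      (∀ v : H, (∃ w : H, ∀ u ∈ Dom,
        inner (𝕜 := ℂ) (Binv (B (D u))) v = inner (𝕜 := ℂ) (Binv u) w) → v ∈ Dom) := by
  have hunit : IsUnit B := by
    apply ContinuousLinearMap.isUnit_of_forall_le_norm_inner_map B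
      (c := ⟨lam, hlam.le⟩) (by exact_mod_cast hlam)
    intro x
    calc ‖x‖ ^ 2 * lam = lam * ‖x‖ ^ 2 := by ring
    _ ≤ (inner (𝕜 := ℂ) (B x) x).re := hBpos x
    _ ≤ ‖inner (𝕜 := ℂ) (B x) x‖ := Complex.re_le_norm _
  obtain ⟨U, hU⟩ := hunit
  set Binv : H →L[ℂ] H := ↑U⁻¹ with hBinvdef
  have hcomp1 : Binv.comp B = ContinuousLinearMap.id ℂ H := by
    rw [hBinvdef, ← ContinuousLinearMap.mul_def, ← hU, ← Units.val_mul, inv_mul_cancel,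
      Units.val_one]; rfl
  have hcomp2 : B.comp Binv = ContinuousLinearMap.id ℂ H := by
    rw [hBinvdef, ← ContinuousLinearMap.mul_def, ← hU, ← Units.val_mul, mul_inv_cancel,
      Units.val_one]; rfl
  have hIB : ∀ u : H, Binv (B u) = u := fun u => DFunLike.congr_fun hcomp1 u
  have hBI : ∀ u : H, B (Binv u) = u := fun u => DFunLike.congr_fun hcomp2 u
  have hsa : ∀ x y : H, inner (𝕜 := ℂ) (B x) y = inner (𝕜 := ℂ) x (B y) := fun x y => by
    rw [← ContinuousLinearMap.isSelfAdjoint_iff'.mp hBsa, ContinuousLinearMap.adjoint_inner_left,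
      ContinuousLinearMap.isSelfAdjoint_iff'.mp hBsa]
  have hIsa : ∀ x y : H, inner (𝕜 := ℂ) (Binv x) y = inner (𝕜 := ℂ) x (Binv y) := fun x y => by
    conv_lhs => rw [← hBI y]
    rw [← hsa, hBI]
  have hpos' : ∀ x : H, 0 ≤ (inner (𝕜 := ℂ) (B x) x).re := fun x =>
    le_trans (by positivity) (hBpos x)
  have hre : ∀ u : H, inner (𝕜 := ℂ) (Binv u) u = inner (𝕜 := ℂ) (B (Binv u)) (Binv u) := by
    intro u; rw [hsa, hBI]
  refine ⟨Binv, hcomp1, hcomp2, ?_, ?_, ?_, ?_, ?_, ?_, ?_⟩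
  · intro u v
    rw [hIsa, ← inner_conj_symm]
  · intro u v w; exact inner_add_right _ _ _
  · intro a u v; exact inner_smul_right _ _ _
  · intro u
    have hconj : starRingEnd ℂ (inner (𝕜 := ℂ) (Binv u) u) = inner (𝕜 := ℂ) (Binv u) u := by
      rw [inner_conj_symm, hIsa]
    have hge : lam * ‖Binv u‖ ^ 2 ≤ (inner (𝕜 := ℂ) (Binv u) u).re := by
      rw [hre]; exact hBpos _
    refine ⟨le_trans (by positivity) hge, ?_, ?_, ?_⟩
    · have h2 := congrArg Complex.im hconj
      simp only [Complex.conj_im] at h2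
      linarith
    · intro h0
      rw [h0] at hge
      simp only [Complex.zero_re] at hge
      have hx0 : Binv u = 0 := by
        have h2 : ‖Binv u‖ ^ 2 ≤ 0 := by nlinarith
        have h3 : ‖Binv u‖ ≤ 0 := by nlinarith [norm_nonneg (Binv u)]
        exact norm_eq_zero.mp (le_antisymm h3 (norm_nonneg _))
      have := hBI u
      rw [hx0] at this
      simpa using this.symm
    · rintro rfl; simp
  · intro u
    by_cases hu : u = 0
    · subst hu; simp
    · have hu2 : (0:ℝ) < ‖u‖ ^ 2 := pow_pos (norm_pos_iff.mpr hu) 2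
      set x := Binv u with hx
      have hBx : B x = u := hBI u
      set a := (inner (𝕜 := ℂ) (B x) x).re with ha
      set c := (inner (𝕜 := ℂ) (B u) u).re with hc
      have hbval : (inner (𝕜 := ℂ) (B x) u).re = ‖u‖ ^ 2 := by
        rw [hBx]
        simpa using (inner_self_eq_norm_sq (𝕜 := ℂ) u)
      have key : ∀ t : ℝ, 0 ≤ c * (t * t) + (-2 * ‖u‖ ^ 2) * t + a := by
        intro t
        have h0 : 0 ≤ (inner (𝕜 := ℂ) (B (x - (t:ℂ) • u)) (x - (t:ℂ) • u)).re := hpos' _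
        have hcross : inner (𝕜 := ℂ) (B u) x = starRingEnd ℂ (inner (𝕜 := ℂ) (B x) u) := by
          rw [hsa, ← inner_conj_symm]
        have hexp : inner (𝕜 := ℂ) (B (x - (t:ℂ) • u)) (x - (t:ℂ) • u)
            = inner (𝕜 := ℂ) (B x) x - (t:ℂ) * inner (𝕜 := ℂ) (B x) u
              - (t:ℂ) * starRingEnd ℂ (inner (𝕜 := ℂ) (B x) u)
              + (t:ℂ) * ((t:ℂ) * inner (𝕜 := ℂ) (B u) u) := by
          simp only [map_sub, map_smul, inner_sub_left, inner_sub_right, inner_smul_left,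
            inner_smul_right, hcross, Complex.conj_ofReal]
          ring
        rw [hexp] at h0
        simp only [Complex.add_re, Complex.sub_re, Complex.re_ofReal_mul, Complex.conj_re,
          hbval] at h0
        rw [← ha, ← hc] at h0
        nlinarith [h0]
      have hdisc := discrim_le_zero key
      rw [discrim] at hdisc
      have hcpos : 0 < c := lt_of_lt_of_le (by positivity) (hBpos u)
      have hcle : c ≤ ‖B‖ * ‖u‖ ^ 2 := by
        calc c ≤ ‖inner (𝕜 := ℂ) (B u) u‖ := Complex.re_le_norm _
        _ ≤ ‖B u‖ * ‖u‖ := norm_inner_le_norm _ _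
        _ ≤ (‖B‖ * ‖u‖) * ‖u‖ := by
            have := B.le_opNorm u
            nlinarith [norm_nonneg u]
        _ = ‖B‖ * ‖u‖ ^ 2 := by ring
      have hreEq : (inner (𝕜 := ℂ) (Binv u) u).re = a := by rw [hre]
      constructor
      · rw [hreEq]
        -- (2‖u‖²)² ≤ 4 c a,  c ≤ ‖B‖‖u‖², ‖u‖² > 0 ⟹ ‖u‖² ≤ ‖B‖ a
        have hanneg : 0 ≤ a := hpos' x
        nlinarith [hdisc, hcle, hu2, hcpos, hanneg]
      · rw [hreEq]
        have h1 : lam * ‖x‖ ^ 2 ≤ a := hBpos x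
        have h2 : a ≤ ‖u‖ * ‖x‖ := by
          calc a ≤ ‖inner (𝕜 := ℂ) (B x) x‖ := Complex.re_le_norm _
          _ ≤ ‖B x‖ * ‖x‖ := norm_inner_le_norm _ _
          _ = ‖u‖ * ‖x‖ := by rw [hBx]
        have hxle : ‖x‖ ≤ lam⁻¹ * ‖u‖ := by
          rcases eq_or_lt_of_le (norm_nonneg x) with h | h
          · rw [← h]; positivity
          · have hxu : lam * ‖x‖ ≤ ‖u‖ := by nlinarith
            rw [inv_mul_eq_div, le_div_iff₀ hlam]
            linarith
        calc a ≤ ‖u‖ * ‖x‖ := h2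
        _ ≤ ‖u‖ * (lam⁻¹ * ‖u‖) := by nlinarith [norm_nonneg u]
        _ = lam⁻¹ * ‖u‖ ^ 2 := by ring
  · intro u hu v hv
    rw [hIB, hDsym u hu v hv, ← hsa, hBI]
  · rintro v ⟨w, hw⟩
    refine hDmax v ⟨Binv w, fun u hu => ?_⟩
    have := hw u hu
    rwa [hIB, hIsa] at this
end

section
/- Let (M,d) be a metric space with a σ-finite Borel measure μ, let m ≥ 1, and write H = L²(μ;ℂ^m). Let D : Dom(D) ⊆ H → H be a densely defined linear operator, and suppose there is κ > 0 such that for every bounded Lipschitz function η : M → ℝ and every u ∈ Dom(D): η·u ∈ Dom(D), ‖η·(Du) − D(η·u)‖ ≤ κ·Lip(η)·‖u‖, and η²·(Du) − 2η·D(η·u) + D(η²·u) = 0. Let B ∈ L^∞(M; ℂ^{m×m}) define a multiplication operator on H that is self-adjoint and satisfies ⟨Bu,u⟩ ≥ λ‖u‖² for all u ∈ H, for some λ > 0, and write ‖u‖_B := ⟨B⁻¹u,u⟩^{1/2}. Let V : ℝ → B(H) be a C₀ group generated by iBD (with Dom(BD) = Dom(D)) satisfying ‖V(t)u‖_B ≤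 ‖u‖_B for all t ∈ ℝ and u ∈ H. Then V has finite propagation speed at most κ‖B‖_∞: for every closed set K ⊆ M, every u ∈ H vanishing μ-a.e. outside K, and every t ∈ ℝ, V(t)u vanishes μ-a.e. on {x ∈ M : dist(x,K) > κ‖B‖_∞|t|}. -/
/-!
Conjugate the group by the bounded weights `P_s = exp (s · min (dist (·, K), R))`, `s > 0`.
Polarising the identity `[[D, η], η] = 0` shows that `c ↦ [P_c, D]` behaves like a derivation
of the multiplicative family `P_c`; splitting `P_s` into many small factors then improves the
Lipschitz bound `‖[P_s, D]‖ ≤ κ s e^{sR}` to `‖[P_s, D] v‖ ≤ κ s ‖P_s v‖`.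
As the group contracts the `B`-norm for positive and negative times, `⟪D v, v⟫` is real, so the
weighted energy `‖P_s V(τ) v‖_B²` has derivative `2 Im ⟪[P_s, D] V(τ) v, P_s V(τ) v⟫`, which is at
most `2 κ ‖B‖_∞ s` times the energy. Gronwall gives `‖P_s V(t) u‖² ≲ e^{2 κ ‖B‖_∞ s |t|}`, because
`P_s u = u`, while `P_s` multiplies by `e^{sR}` where `dist (·, K) ≥ R`; letting `s → ∞` kills
`V(t) u` there as soon as `R > κ ‖B‖_∞ |t|`.
-/

open MeasureTheory Complex Filter Topology
open scoped ENNReal NNReal InnerProductSpace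

theorem le_exp_mul_of_hasDerivAt_le {G G' : ℝ → ℝ} {a t : ℝ} (hG : ∀ τ, HasDerivAt G (G' τ) τ)
    (hbound : ∀ τ, G' τ ≤ a * G τ) (ht : 0 ≤ t) : G t ≤ Real.exp (a * t) * G 0 := by
  have hderiv : ∀ τ, HasDerivAt (fun σ => Real.exp (-a * σ) * G σ)
      (Real.exp (-a * τ) * (G' τ - a * G τ)) τ := fun τ =>
    ((((hasDerivAt_id' τ).const_mul (-a)).exp).mul (hG τ)).congr_deriv (by ring)
  have hdecay := antitone_of_hasDerivAt_nonpos hderiv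
    (fun τ => mul_nonpos_of_nonneg_of_nonpos (Real.exp_pos _).le (sub_nonpos.2 (hbound τ))) ht
  have hexp : Real.exp (a * t) * Real.exp (-a * t) = 1 := by rw [← Real.exp_add]; simp
  simp only [mul_zero, Real.exp_zero, one_mul] at hdecay
  calc G t = Real.exp (a * t) * (Real.exp (-a * t) * G t) := by rw [← mul_assoc, hexp, one_mul]
    _ ≤ Real.exp (a * t) * G 0 := by gcongr

theorem le_exp_mul_abs_of_abs_hasDerivAt_le {G G' : ℝ → ℝ} {a : ℝ}
    (hG : ∀ τ, HasDerivAt G (G' τ) τ) (hbound : ∀ τ, |G' τ| ≤ a * G τ) (t : ℝ) :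
    G t ≤ Real.exp (a * |t|) * G 0 := by
  rcases le_total 0 t with ht | ht
  · rw [abs_of_nonneg ht]
    exact le_exp_mul_of_hasDerivAt_le hG (fun τ => (le_abs_self _).trans (hbound τ)) ht
  · have hGneg : ∀ τ, HasDerivAt (fun σ => G (-σ)) (-G' (-τ)) τ := fun τ => by
      simpa [Function.comp_def] using (hG (-τ)).comp τ (hasDerivAt_neg τ)
    simpa [abs_of_nonpos ht] using le_exp_mul_of_hasDerivAt_le hGneg
      (fun τ => (neg_le_abs _).trans (hbound (-τ))) (neg_nonneg.2 ht)

theorem abs_exp_sub_exp_le {x y C : ℝ} (hx : x ≤ C) (hy : y ≤ C) :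
    |Real.exp x - Real.exp y| ≤ Real.exp C * |x - y| :=
  (convex_Iic C).norm_image_sub_le_of_norm_hasDerivWithin_le
    (fun z _ => (Real.hasDerivAt_exp z).hasDerivWithinAt)
    (fun z hz => by simpa using Real.exp_le_exp.2 hz) hy hx

theorem LipschitzWith.exp_mul {X : Type*} [PseudoMetricSpace X] {ξ : X → ℝ} {K : ℝ≥0}
    (hξ : LipschitzWith K ξ) {R : ℝ} (hbd : ∀ x, |ξ x| ≤ R) (c : ℝ) :
    LipschitzWith (Real.toNNReal (|c| * Real.exp (|c| * R)) * K)
      (fun x => Real.exp (c * ξ x)) := by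
  have hle : ∀ x, c * ξ x ≤ |c| * R := fun x =>
    (le_abs_self _).trans ((abs_mul c (ξ x)).trans_le (by gcongr; exact hbd x))
  refine LipschitzWith.of_dist_le_mul fun x y => ?_
  rw [Real.dist_eq, NNReal.coe_mul, Real.coe_toNNReal _ (by positivity)]
  calc |Real.exp (c * ξ x) - Real.exp (c * ξ y)|
      ≤ Real.exp (|c| * R) * (|c| * |ξ x - ξ y|) := by
        rw [← abs_mul, mul_sub]; exact abs_exp_sub_exp_le (hle x) (hle y)
    _ ≤ Real.exp (|c| * R) * (|c| * (K * dist x y)) := by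
        gcongr; rw [← Real.dist_eq]; exact hξ.dist_le_mul x y
    _ = |c| * Real.exp (|c| * R) * K * dist x y := by ring

section Commutator

variable {𝕜 H : Type*} [Field 𝕜] [CharZero 𝕜] [AddCommGroup H] [Module 𝕜 H]
  {Dom : Submodule 𝕜 H} {D : H → H}

/-- The hypotheses say that the double commutators `[[D, S], S]` vanish for `S = P, Q, P + Q`.
Polarisation gives `[[D, P], Q] + [[D, Q], P] = 0`, and since `P` and `Q` commute the two terms
agree (Jacobi), so `[[D, P], Q] = 0`. -/
theorem commutator_apply_comm_of_double_commutator_eq_zero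
    (hD : ∀ u ∈ Dom, ∀ v ∈ Dom, D (u + v) = D u + D v) {P Q : Module.End 𝕜 H}
    (hPQ : Commute P Q) (hP : ∀ v ∈ Dom, P v ∈ Dom) (hQ : ∀ v ∈ Dom, Q v ∈ Dom)
    (hPP : ∀ v ∈ Dom, P (P (D v)) - (2 : 𝕜) • P (D (P v)) + D (P (P v)) = 0)
    (hQQ : ∀ v ∈ Dom, Q (Q (D v)) - (2 : 𝕜) • Q (D (Q v)) + D (Q (Q v)) = 0)
    (hPQPQ : ∀ v ∈ Dom, (P + Q) ((P + Q) (D v)) - (2 : 𝕜) • (P + Q) (D ((P + Q) v))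
      + D ((P + Q) ((P + Q) v)) = 0)
    {v : H} (hv : v ∈ Dom) : Q (P (D v) - D (P v)) = P (D (Q v)) - D (P (Q v)) := by
  have hcomm : ∀ w, Q (P w) = P (Q w) := fun w => (LinearMap.congr_fun hPQ.eq w).symm
  have hPv := hP v hv
  have hQv := hQ v hv
  have hPPv := hP _ hPv
  have hPQv := hP _ hQv
  have hQQv := hQ _ hQv
  have h := hPQPQ v hv
  simp only [LinearMap.add_apply, map_add, hcomm] at h
  rw [hD _ hPv _ hQv, hD _ (add_mem hPPv hPQv) _ (add_mem hPQv hQQv), hD _ hPPv _ hPQv,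
    hD _ hPQv _ hQQv, map_add, map_add] at h
  rw [map_sub, hcomm]
  linear_combination (norm := module) (2⁻¹ : 𝕜) • (h - hPP v hv - hQQ v hv)

end Commutator

section OneParameterFamily

variable {𝕜 H : Type*} [NontriviallyNormedField 𝕜] [NormedAddCommGroup H] [NormedSpace 𝕜 H]
  {Dom : Submodule 𝕜 H} {D : H → H} {P : ℝ → H →L[𝕜] H}

theorem commutator_add (hPadd : ∀ c c', P (c + c') = P c * P c')
    (hcomm : ∀ c c', ∀ v ∈ Dom,
      P c' (P c (D v) - D (P c v)) = P c (D (P c' v)) - D (P c (P c' v)))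
    (c c' : ℝ) {v : H} (hv : v ∈ Dom) :
    P (c + c') (D v) - D (P (c + c') v)
      = P c (P c' (D v) - D (P c' v)) + P c' (P c (D v) - D (P c v)) := by
  rw [hPadd, mul_apply_eq_comp, mul_apply_eq_comp, map_sub, hcomm c c' v hv]
  abel

theorem commutator_natCast_mul (hP0 : P 0 = 1) (hPadd : ∀ c c', P (c + c') = P c * P c')
    (hcomm : ∀ c c', ∀ v ∈ Dom,
      P c' (P c (D v) - D (P c v)) = P c (D (P c' v)) - D (P c (P c' v)))
    (c : ℝ) (n : ℕ) {v : H} (hv : v ∈ Dom) :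
    P ((n + 1) * c) (D v) - D (P ((n + 1) * c) v)
      = (n + 1) • P (n * c) (P c (D v) - D (P c v)) := by
  induction n with
  | zero => simp [hP0]
  | succ n ih =>
    have hsplit : ((n + 1 : ℕ) + 1 : ℝ) * c = c + (n + 1) * c := by push_cast; ring
    rw [hsplit, commutator_add hPadd hcomm c _ hv, ih, map_nsmul, ← mul_apply_eq_comp, ← hPadd,
      show c + n * c = (n + 1) * c by ring]
    push_cast
    exact (succ_nsmul _ _).symm

/-- Writing `P s` as the `(n + 1)`-st power of `P c`, `c = s / (n + 1)`, the commutator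
`[P s, D] v` becomes `(n + 1) • P (-c) [P c, D] (P s v)`, and the Lipschitz bound is only paid
for the small factor `P c`. -/
theorem norm_commutator_le_exp_div (hP0 : P 0 = 1) (hPadd : ∀ c c', P (c + c') = P c * P c')
    (hcomm : ∀ c c', ∀ v ∈ Dom,
      P c' (P c (D v) - D (P c v)) = P c (D (P c' v)) - D (P c (P c' v)))
    (hcontr : ∀ c ≤ 0, ∀ w, ‖P c w‖ ≤ ‖w‖) {κ R : ℝ}
    (hbound : ∀ c > 0, ∀ v ∈ Dom, ‖P c (D v) - D (P c v)‖ ≤ κ * c * Real.exp (c * R) * ‖v‖)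
    {s : ℝ} (hs : 0 < s) {v : H} (hv : v ∈ Dom) (hsv : P s v ∈ Dom) (n : ℕ) :
    ‖P s (D v) - D (P s v)‖ ≤ κ * s * Real.exp (s / (n + 1) * R) * ‖P s v‖ := by
  set c := s / (n + 1) with hc
  have hcpos : 0 < c := by positivity
  have hcs : (n + 1) * c = s := by rw [hc]; field_simp
  have hPsv : P (-s) (P s v) = v := by
    rw [← mul_apply_eq_comp, ← hPadd, neg_add_cancel, hP0, one_apply_eq_self]
  have hshift : P c (D v) - D (P c v) = P (-s) (P c (D (P s v)) - D (P c (P s v))) := by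
    rw [hcomm c (-s) _ hsv, hPsv]
  have hpower : P s (D v) - D (P s v)
      = (n + 1) • P (-c) (P c (D (P s v)) - D (P c (P s v))) := by
    have h := commutator_natCast_mul hP0 hPadd hcomm c n hv
    rw [hcs] at h
    rw [h, hshift, ← mul_apply_eq_comp, ← hPadd, show (n : ℝ) * c + -s = -c by linarith]
  calc ‖P s (D v) - D (P s v)‖
      ≤ (n + 1) * ‖P c (D (P s v)) - D (P c (P s v))‖ := by
        rw [hpower]
        refine norm_nsmul_le.trans ?_
        push_cast
        gcongr
        exact hcontr (-c) (by linarith) _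
    _ ≤ (n + 1) * (κ * c * Real.exp (c * R) * ‖P s v‖) := by
        gcongr; exact hbound c hcpos _ hsv
    _ = κ * s * Real.exp (s / (n + 1) * R) * ‖P s v‖ := by
        linear_combination (κ * Real.exp (c * R) * ‖P s v‖) * hcs

theorem norm_commutator_le_of_exp_bound (hP0 : P 0 = 1)
    (hPadd : ∀ c c', P (c + c') = P c * P c')
    (hcomm : ∀ c c', ∀ v ∈ Dom,
      P c' (P c (D v) - D (P c v)) = P c (D (P c' v)) - D (P c (P c' v)))
    (hcontr : ∀ c ≤ 0, ∀ w, ‖P c w‖ ≤ ‖w‖) {κ R : ℝ}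
    (hbound : ∀ c > 0, ∀ v ∈ Dom, ‖P c (D v) - D (P c v)‖ ≤ κ * c * Real.exp (c * R) * ‖v‖)
    {s : ℝ} (hs : 0 < s) {v : H} (hv : v ∈ Dom) (hsv : P s v ∈ Dom) :
    ‖P s (D v) - D (P s v)‖ ≤ κ * s * ‖P s v‖ := by
  have hexp : Tendsto (fun n : ℕ => Real.exp (s / (n + 1) * R)) atTop (𝓝 1) := by
    have h0 : Tendsto (fun n : ℕ => s / (n + 1) * R) atTop (𝓝 0) := by
      simpa [div_eq_mul_one_div s] using
        (tendsto_one_div_add_atTop_nhds_zero_nat.const_mul s).mul_const R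
    exact Real.tendsto_exp_nhds_zero_nhds_one.comp h0
  have hlim := (hexp.const_mul (κ * s)).mul_const ‖P s v‖
  rw [mul_one] at hlim
  exact ge_of_tendsto' hlim (norm_commutator_le_exp_div hP0 hPadd hcomm hcontr hbound hs hv hsv)

end OneParameterFamily

section ExpDistWeight

variable {M : Type*} [MetricSpace M] {K : Set M} {R c c' : ℝ} {x : M}

noncomputable def expDistWeight (K : Set M) (R c : ℝ) (x : M) : ℝ :=
  Real.exp (c * min (Metric.infDist x K) R)

theorem expDistWeight_pos : 0 < expDistWeight K R c x := Real.exp_pos _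

theorem continuous_expDistWeight : Continuous (expDistWeight K R c) := by
  unfold expDistWeight; fun_prop

theorem abs_min_infDist_le : |min (Metric.infDist x K) R| ≤ |R| :=
  abs_le.2 ⟨le_min (by linarith [Metric.infDist_nonneg (x := x) (s := K), abs_nonneg R])
    (neg_abs_le R), (min_le_right _ _).trans (le_abs_self R)⟩

theorem abs_expDistWeight_le : |expDistWeight K R c x| ≤ Real.exp (|c| * |R|) := by
  rw [expDistWeight, Real.abs_exp, Real.exp_le_exp, ← abs_mul]
  refine (le_abs_self _).trans ?_
  rw [abs_mul, abs_mul c]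
  exact mul_le_mul_of_nonneg_left abs_min_infDist_le (abs_nonneg c)

theorem lipschitzWith_expDistWeight (K : Set M) (R c : ℝ) :
    LipschitzWith (Real.toNNReal (|c| * Real.exp (|c| * |R|))) (expDistWeight K R c) := by
  have h := ((Metric.lipschitz_infDist_pt K).min_const R).exp_mul (fun _ => abs_min_infDist_le) c
  rwa [mul_one] at h

theorem expDistWeight_add :
    expDistWeight K R (c + c') x = expDistWeight K R c x * expDistWeight K R c' x := by
  simp only [expDistWeight, add_mul, Real.exp_add]

theorem expDistWeight_zero : expDistWeight K R 0 x = 1 := by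
  simp [expDistWeight]

theorem expDistWeight_le_one (hR : 0 ≤ R) (hc : c ≤ 0) : expDistWeight K R c x ≤ 1 :=
  Real.exp_le_one_iff.2 (mul_nonpos_of_nonpos_of_nonneg hc (le_min Metric.infDist_nonneg hR))

theorem expDistWeight_of_mem (hR : 0 ≤ R) (hx : x ∈ K) : expDistWeight K R c x = 1 := by
  simp [expDistWeight, Metric.infDist_zero_of_mem hx, hR]

theorem expDistWeight_of_le_infDist (hx : R ≤ Metric.infDist x K) :
    expDistWeight K R c x = Real.exp (c * R) := by
  rw [expDistWeight, min_eq_right hx]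

end ExpDistWeight

section ExpDistWeightL2

variable {M : Type*} [MetricSpace M] [MeasurableSpace M] [BorelSpace M] {μ : Measure M}
  {E : Type*} [NormedAddCommGroup E] [NormedSpace ℂ E] {K : Set M} {R c : ℝ}

theorem memLp_top_expDistWeight (μ : Measure M) (K : Set M) (R c : ℝ) :
    MemLp (fun x => (expDistWeight K R c x : ℂ)) ∞ μ :=
  memLp_top_of_bound (continuous_ofReal.comp continuous_expDistWeight).aestronglyMeasurable _
    (.of_forall fun _ => by rw [norm_real, Real.norm_eq_abs]; exact abs_expDistWeight_le)

noncomputable def expDistWeightL2 (μ : Measure M) (K : Set M) (R c : ℝ) :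
    Lp E 2 μ →L[ℂ] Lp E 2 μ :=
  (ContinuousLinearMap.lsmul ℂ ℂ).holderL μ ∞ 2 2 ((memLp_top_expDistWeight μ K R c).toLp _)

theorem coeFn_expDistWeightL2 (w : Lp E 2 μ) :
    (expDistWeightL2 μ K R c w : M → E) =ᵐ[μ] fun x => (expDistWeight K R c x : ℂ) • w x := by
  filter_upwards [ContinuousLinearMap.coeFn_holder (ContinuousLinearMap.lsmul ℂ ℂ) (r := 2)
    ((memLp_top_expDistWeight μ K R c).toLp _) w, (memLp_top_expDistWeight μ K R c).coeFn_toLp]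
    with x h1 h2
  rw [expDistWeightL2, ContinuousLinearMap.holderL_apply_apply, h1,
    ContinuousLinearMap.lsmul_apply, h2]

theorem expDistWeightL2_add (c c' : ℝ) :
    (expDistWeightL2 μ K R (c + c') : Lp E 2 μ →L[ℂ] Lp E 2 μ)
      = expDistWeightL2 μ K R c * expDistWeightL2 μ K R c' := by
  ext1 w
  refine Lp.ext ?_
  filter_upwards [coeFn_expDistWeightL2 (c := c + c') w,
    coeFn_expDistWeightL2 (c := c) (expDistWeightL2 μ K R c' w),
    coeFn_expDistWeightL2 (c := c') w] with x h1 h2 h3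
  rw [mul_apply_eq_comp, h1, h2, h3, expDistWeight_add, ofReal_mul, mul_smul]

theorem expDistWeightL2_zero : (expDistWeightL2 μ K R 0 : Lp E 2 μ →L[ℂ] Lp E 2 μ) = 1 := by
  ext1 w
  refine Lp.ext ?_
  filter_upwards [coeFn_expDistWeightL2 (c := 0) w] with x h
  rw [h, expDistWeight_zero, ofReal_one, one_smul, one_apply_eq_self]

theorem norm_expDistWeightL2_apply_le (hR : 0 ≤ R) (hc : c ≤ 0) (w : Lp E 2 μ) :
    ‖expDistWeightL2 μ K R c w‖ ≤ ‖w‖ := by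
  refine Lp.norm_le_norm_of_ae_le ?_
  filter_upwards [coeFn_expDistWeightL2 (c := c) w] with x h
  rw [h, norm_smul, norm_real, Real.norm_eq_abs, abs_of_pos expDistWeight_pos]
  exact mul_le_of_le_one_left (norm_nonneg _) (expDistWeight_le_one hR hc)

theorem expDistWeightL2_apply_eq_self (hR : 0 ≤ R) {u : Lp E 2 μ}
    (hu : ∀ᵐ x ∂μ, x ∉ K → (u : M → E) x = 0) : expDistWeightL2 μ K R c u = u := by
  refine Lp.ext ?_
  filter_upwards [coeFn_expDistWeightL2 (c := c) u, hu] with x h hx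
  by_cases hxK : x ∈ K
  · rw [h, expDistWeight_of_mem hR hxK, ofReal_one, one_smul]
  · rw [h, hx hxK, smul_zero]

theorem norm_expDistWeightL2_apply_of_le_infDist (w : Lp E 2 μ) :
    ∀ᵐ x ∂μ, R ≤ Metric.infDist x K →
      ‖(expDistWeightL2 μ K R c w : M → E) x‖ = Real.exp (c * R) * ‖(w : M → E) x‖ := by
  filter_upwards [coeFn_expDistWeightL2 (c := c) w] with x h hx
  rw [h, norm_smul, norm_real, Real.norm_eq_abs, expDistWeight_of_le_infDist hx,
    abs_of_pos (Real.exp_pos _)]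

theorem expDistWeightL2_comm_of_ae_eq {T : Lp E 2 μ →L[ℂ] Lp E 2 μ} (b : M → E →L[ℂ] E)
    (hT : ∀ u, (T u : M → E) =ᵐ[μ] fun x => b x ((u : M → E) x)) :
    T * expDistWeightL2 μ K R c = expDistWeightL2 μ K R c * T := by
  ext1 w
  refine Lp.ext ?_
  filter_upwards [hT (expDistWeightL2 μ K R c w), coeFn_expDistWeightL2 (c := c) w,
    coeFn_expDistWeightL2 (c := c) (T w), hT w] with x h1 h2 h3 h4
  rw [mul_apply_eq_comp, mul_apply_eq_comp, h1, h2, h3, h4, map_smul]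

end ExpDistWeightL2

section LipschitzCommutators

variable {M : Type*} [MetricSpace M] [MeasurableSpace M] [BorelSpace M] {μ : Measure M}
  {E : Type*} [NormedAddCommGroup E] [NormedSpace ℂ E]
  {Dom : Submodule ℂ (Lp E 2 μ)} {D : Lp E 2 μ → Lp E 2 μ} {κ : ℝ}

/-- The last identity says that the double commutator `[[D, η], η]` vanishes. -/
def HasLipschitzCommutators (μ : Measure M) (Dom : Submodule ℂ (Lp E 2 μ))
    (D : Lp E 2 μ → Lp E 2 μ) (κ : ℝ) : Prop :=
  ∀ (η : M → ℝ) (L : NNReal), LipschitzWith L η → (∃ C, ∀ x, |η x| ≤ C) →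
    ∀ Mη : Lp E 2 μ →L[ℂ] Lp E 2 μ,
      (∀ u, (Mη u : M → E) =ᵐ[μ] fun x => (η x : ℂ) • (u : M → E) x) →
      ∀ u ∈ Dom, Mη u ∈ Dom ∧ ‖Mη (D u) - D (Mη u)‖ ≤ κ * L * ‖u‖ ∧
        Mη (Mη (D u)) - (2 : ℂ) • Mη (D (Mη u)) + D (Mη (Mη u)) = 0

namespace HasLipschitzCommutators

variable (K : Set M) (R : ℝ)

theorem commutator_expDistWeightL2 (hD : HasLipschitzCommutators μ Dom D κ) (c : ℝ)
    {v : Lp E 2 μ} (hv : v ∈ Dom) :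
    let P := expDistWeightL2 μ K R c
    P v ∈ Dom ∧ ‖P (D v) - D (P v)‖ ≤ κ * |c| * Real.exp (|c| * |R|) * ‖v‖ ∧
      P (P (D v)) - (2 : ℂ) • P (D (P v)) + D (P (P v)) = 0 := by
  have h := hD _ _ (lipschitzWith_expDistWeight K R c) ⟨_, fun _ => abs_expDistWeight_le⟩ _
    (fun w => coeFn_expDistWeightL2 w) v hv
  rwa [Real.coe_toNNReal _ (by positivity), ← mul_assoc κ] at h

theorem double_commutator_expDistWeightL2_add (hD : HasLipschitzCommutators μ Dom D κ)
    (c c' : ℝ) {v : Lp E 2 μ} (hv : v ∈ Dom) :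
    let P := expDistWeightL2 μ K R c + expDistWeightL2 μ K R c'
    P (P (D v)) - (2 : ℂ) • P (D (P v)) + D (P (P v)) = 0 := by
  refine (hD _ _ ((lipschitzWith_expDistWeight K R c).add (lipschitzWith_expDistWeight K R c'))
    ⟨_, fun _ => (abs_add_le _ _).trans (add_le_add abs_expDistWeight_le abs_expDistWeight_le)⟩
    _ (fun w => ?_) v hv).2.2
  filter_upwards [coeFn_expDistWeightL2 (c := c) w, coeFn_expDistWeightL2 (c := c') w,
    Lp.coeFn_add (expDistWeightL2 μ K R c w) (expDistWeightL2 μ K R c' w)] with x h1 h2 h3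
  rw [add_apply, h3, Pi.add_apply, h1, h2, ofReal_add, add_smul]

theorem expDistWeightL2_commutator_comm (hD : HasLipschitzCommutators μ Dom D κ)
    (hDadd : ∀ u ∈ Dom, ∀ v ∈ Dom, D (u + v) = D u + D v) (c c' : ℝ) {v : Lp E 2 μ}
    (hv : v ∈ Dom) :
    let P := expDistWeightL2 (E := E) μ K R
    P c' (P c (D v) - D (P c v)) = P c (D (P c' v)) - D (P c (P c' v)) := by
  have hPQ : Commute (expDistWeightL2 (E := E) μ K R c).toLinearMap
      (expDistWeightL2 (E := E) μ K R c').toLinearMap := by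
    rw [commute_iff_eq, ← ContinuousLinearMap.toLinearMap_mul,
      ← ContinuousLinearMap.toLinearMap_mul, ← expDistWeightL2_add, ← expDistWeightL2_add,
      add_comm]
  exact commutator_apply_comm_of_double_commutator_eq_zero hDadd hPQ
    (fun w hw => (hD.commutator_expDistWeightL2 K R c hw).1)
    (fun w hw => (hD.commutator_expDistWeightL2 K R c' hw).1)
    (fun w hw => (hD.commutator_expDistWeightL2 K R c hw).2.2)
    (fun w hw => (hD.commutator_expDistWeightL2 K R c' hw).2.2)
    (fun w hw => hD.double_commutator_expDistWeightL2_add K R c c' hw) hv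

theorem norm_commutator_expDistWeightL2_le (hD : HasLipschitzCommutators μ Dom D κ)
    (hDadd : ∀ u ∈ Dom, ∀ v ∈ Dom, D (u + v) = D u + D v) (hR : 0 ≤ R) {s : ℝ}
    (hs : 0 < s) {v : Lp E 2 μ} (hv : v ∈ Dom) :
    ‖expDistWeightL2 μ K R s (D v) - D (expDistWeightL2 μ K R s v)‖
      ≤ κ * s * ‖expDistWeightL2 μ K R s v‖ := by
  have hbound : ∀ c > 0, ∀ w ∈ Dom,
      ‖expDistWeightL2 μ K R c (D w) - D (expDistWeightL2 μ K R c w)‖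
        ≤ κ * c * Real.exp (c * R) * ‖w‖ := fun c hc w hw => by
    simpa only [abs_of_pos hc, abs_of_nonneg hR] using
      (hD.commutator_expDistWeightL2 K R c hw).2.1
  exact norm_commutator_le_of_exp_bound (H := Lp E 2 μ) (P := expDistWeightL2 μ K R)
    expDistWeightL2_zero expDistWeightL2_add
    (fun c c' _ hw => hD.expDistWeightL2_commutator_comm K R hDadd c c' hw)
    (fun _ hc w => norm_expDistWeightL2_apply_le hR hc w) hbound hs hv
    (hD.commutator_expDistWeightL2 K R s hv).1

end HasLipschitzCommutators

end LipschitzCommutators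

section Energy

variable {H : Type*} [NormedAddCommGroup H] [InnerProductSpace ℂ H] [CompleteSpace H]
  {Dom : Submodule ℂ H} {D : H → H} {B Binv : H →L[ℂ] H} {V : ℝ → H →L[ℂ] H}

theorem hasDerivAt_re_inner_inv_apply (hB : IsSelfAdjoint B)
    (hBinv₁ : Binv.comp B = ContinuousLinearMap.id ℂ H)
    (hBinv₂ : B.comp Binv = ContinuousLinearMap.id ℂ H)
    (hVderiv : ∀ t : ℝ, ∀ u ∈ Dom, HasDerivAt (fun s => V s u) (I • V t (B (D u))) t)
    (hVBD : ∀ t : ℝ, ∀ u ∈ Dom, V t (B (D u)) = B (D (V t u)))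
    {P : H →L[ℂ] H} (hPB : B * P = P * B) {v : H} (hv : v ∈ Dom) (τ : ℝ) :
    HasDerivAt (fun σ => re ⟪Binv (P (V σ v)), P (V σ v)⟫_ℂ)
      (2 * im ⟪P (D (V τ v)), P (V τ v)⟫_ℂ) τ := by
  have hγ := (P.restrictScalars ℝ).hasFDerivAt.comp_hasDerivAt τ (hVderiv τ v hv)
  have hBγ := (Binv.restrictScalars ℝ).hasFDerivAt.comp_hasDerivAt τ hγ
  refine (reCLM.hasFDerivAt.comp_hasDerivAt τ (hBγ.inner ℂ hγ)).congr_deriv ?_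
  set f := V τ v
  have hγ' : P (I • V τ (B (D v))) = I • B (P (D f)) := by
    rw [hVBD τ v hv, map_smul, ← mul_apply_eq_comp, ← hPB, mul_apply_eq_comp]
  have hBinvB : ∀ w, Binv (B w) = w := fun w => by simpa using congr($hBinv₁ w)
  have hBBinv : ∀ w, B (Binv w) = w := fun w => by simpa using congr($hBinv₂ w)
  simp only [ContinuousLinearMap.coe_restrictScalars', Function.comp_apply, reCLM_apply]
  rw [hγ', map_smul, hBinvB, inner_smul_right, inner_smul_left, ← hB.isSymmetric.apply_clm, hBBinv,
    ← inner_conj_symm (P f)]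
  simp only [add_re, mul_re, I_re, I_im, conj_re, conj_im]
  ring

theorem im_inner_apply_self_eq_zero (hB : IsSelfAdjoint B)
    (hBinv₁ : Binv.comp B = ContinuousLinearMap.id ℂ H)
    (hBinv₂ : B.comp Binv = ContinuousLinearMap.id ℂ H)
    (hV0 : V 0 = ContinuousLinearMap.id ℂ H)
    (hVderiv : ∀ t : ℝ, ∀ u ∈ Dom, HasDerivAt (fun s => V s u) (I • V t (B (D u))) t)
    (hVBD : ∀ t : ℝ, ∀ u ∈ Dom, V t (B (D u)) = B (D (V t u)))
    (hVcontraction : ∀ (t : ℝ) u, re ⟪Binv (V t u), V t u⟫_ℂ ≤ re ⟪Binv u, u⟫_ℂ)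
    {v : H} (hv : v ∈ Dom) : im ⟪D v, v⟫_ℂ = 0 := by
  have hderiv := hasDerivAt_re_inner_inv_apply hB hBinv₁ hBinv₂ hVderiv hVBD (P := 1)
    (by rw [mul_one, one_mul]) hv 0
  have hmax : IsLocalMax (fun σ => re ⟪Binv (V σ v), V σ v⟫_ℂ) 0 :=
    .of_forall fun σ => by simpa [hV0] using hVcontraction σ v
  simp only [one_apply_eq_self, hV0, ContinuousLinearMap.id_apply] at hderiv
  linarith [hmax.hasDerivAt_eq_zero hderiv]

theorem re_inner_inv_apply_le_exp_mul (hB : IsSelfAdjoint B)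
    (hBinv₁ : Binv.comp B = ContinuousLinearMap.id ℂ H)
    (hBinv₂ : B.comp Binv = ContinuousLinearMap.id ℂ H)
    (hV0 : V 0 = ContinuousLinearMap.id ℂ H)
    (hVderiv : ∀ t : ℝ, ∀ u ∈ Dom, HasDerivAt (fun s => V s u) (I • V t (B (D u))) t)
    (hVBD : ∀ t : ℝ, ∀ u ∈ Dom, V t (B (D u)) = B (D (V t u)))
    (hVdom : ∀ t : ℝ, ∀ u ∈ Dom, V t u ∈ Dom) (hdense : Dense (Dom : Set H))
    (hDsym : ∀ v ∈ Dom, im ⟪D v, v⟫_ℂ = 0) {P : H →L[ℂ] H} (hPB : B * P = P * B)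
    (hPdom : ∀ v ∈ Dom, P v ∈ Dom) {κ CB : ℝ} (hκ : 0 ≤ κ)
    (hPD : ∀ v ∈ Dom, ‖P (D v) - D (P v)‖ ≤ κ * ‖P v‖)
    (hcoer : ∀ w, ‖w‖ ^ 2 ≤ CB * re ⟪Binv w, w⟫_ℂ) (t : ℝ) (w : H) :
    re ⟪Binv (P (V t w)), P (V t w)⟫_ℂ ≤ Real.exp (2 * κ * CB * |t|) * re ⟪Binv (P w), P w⟫_ℂ := by
  refine hdense.induction (fun v hv => ?_) (isClosed_le (by fun_prop) (by fun_prop)) w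
  have hbound : ∀ τ, |2 * im ⟪P (D (V τ v)), P (V τ v)⟫_ℂ|
      ≤ 2 * κ * CB * re ⟪Binv (P (V τ v)), P (V τ v)⟫_ℂ := fun τ => by
    set f := V τ v
    have hf : f ∈ Dom := hVdom τ v hv
    have hsplit : im ⟪P (D f), P f⟫_ℂ = im ⟪P (D f) - D (P f), P f⟫_ℂ := by
      rw [inner_sub_left, sub_im, hDsym _ (hPdom f hf), sub_zero]
    calc |2 * im ⟪P (D f), P f⟫_ℂ| = 2 * |im ⟪P (D f) - D (P f), P f⟫_ℂ| := by
          rw [abs_mul, abs_two, hsplit]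
      _ ≤ 2 * (κ * ‖P f‖ * ‖P f‖) := by
          gcongr
          exact (abs_im_le_norm _).trans ((norm_inner_le_norm _ _).trans
            (mul_le_mul_of_nonneg_right (hPD f hf) (norm_nonneg _)))
      _ = 2 * κ * ‖P f‖ ^ 2 := by ring
      _ ≤ 2 * κ * CB * re ⟪Binv (P f), P f⟫_ℂ := by
          rw [mul_assoc (2 * κ)]; gcongr; exact hcoer _
  simpa [hV0] using le_exp_mul_abs_of_abs_hasDerivAt_le
    (hasDerivAt_re_inner_inv_apply hB hBinv₁ hBinv₂ hVderiv hVBD hPB hv) hbound t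

theorem ContinuousLinearMap.IsPositive.norm_apply_sq_le {T : H →L[ℂ] H} (hT : T.IsPositive)
    (z : H) : ‖T z‖ ^ 2 ≤ ‖T‖ * re ⟪T z, z⟫_ℂ := by
  have hT0 : 0 ≤ T := (nonneg_iff_isPositive T).2 hT
  have hsq : T * T ≤ ‖T‖ • T := by
    obtain ⟨S, hSsa, hS⟩ : ∃ S, IsSelfAdjoint S ∧ S * S = T :=
      ⟨_, (CFC.sqrt_nonneg T).isSelfAdjoint, CFC.sqrt_mul_sqrt_self T⟩
    have h := CStarAlgebra.star_left_conjugate_le_norm_smul (a := S) (b := T)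
    rwa [hSsa.star_eq, hS, ← hS, ← mul_assoc, mul_assoc _ S, hS] at h
  have h := ((le_def _ _).1 hsq).re_inner_nonneg_left z
  rw [sub_apply, smul_apply, mul_apply_eq_comp, inner_sub_left, map_sub, hT.isSymmetric.apply_clm,
    inner_self_eq_norm_sq, inner_smul_left_eq_smul] at h
  simpa using h

theorem norm_sq_le_mul_re_inner_inv (hB : B.IsPositive)
    (hBinv₂ : B.comp Binv = ContinuousLinearMap.id ℂ H) {C : ℝ} (hC : ‖B‖ ≤ C) (w : H) :
    ‖w‖ ^ 2 ≤ C * re ⟪Binv w, w⟫_ℂ := by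
  have hBBinv : B (Binv w) = w := by simpa using congr($hBinv₂ w)
  have h := hB.norm_apply_sq_le (Binv w)
  have hnonneg := hB.re_inner_nonneg_left (Binv w)
  rw [hBBinv, ← inner_conj_symm, conj_re] at h
  rw [hBBinv, inner_re_symm] at hnonneg
  exact h.trans (by gcongr)

end Energy

section Vanishing

variable {M : Type*} [MeasurableSpace M] {μ : Measure M} {E : Type*} [NormedAddCommGroup E]

theorem ae_lt_imp_of_forall_le_imp {g : M → ℝ} {a : ℝ} {p : M → Prop}
    (h : ∀ R, a < R → ∀ᵐ x ∂μ, R ≤ g x → p x) : ∀ᵐ x ∂μ, a < g x → p x := by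
  have hrat : ∀ᵐ x ∂μ, ∀ q : ℚ, a < q → q ≤ g x → p x := ae_all_iff.2 fun q => by
    by_cases hq : a < q
    · filter_upwards [h q hq] with x hx _ using hx
    · exact .of_forall fun x hq' => absurd hq' hq
  filter_upwards [hrat] with x hx hax
  obtain ⟨q, haq, hqg⟩ := exists_rat_btwn hax
  exact hx q haq hqg.le

theorem ae_eq_zero_of_sq_norm_le_exp {p : ℝ≥0∞} (hp : p ≠ 0) {A : Set M} (hA : MeasurableSet A)
    {f : Lp E p μ} {g : ℝ → Lp E p μ} {a R C : ℝ} (haR : a < R)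
    (hg : ∀ s, ∀ᵐ x ∂μ, x ∈ A → Real.exp (s * R) * ‖(f : M → E) x‖ ≤ ‖(g s : M → E) x‖)
    (hbound : ∀ s > 0, ‖g s‖ ^ 2 ≤ C * Real.exp (2 * a * s)) :
    ∀ᵐ x ∂μ, x ∈ A → (f : M → E) x = 0 := by
  have hfin : eLpNorm f p (μ.restrict A) ≠ ⊤ :=
    ((eLpNorm_mono_measure (f : M → E) Measure.restrict_le_self).trans_lt (Lp.eLpNorm_lt_top f)).ne
  set N := (eLpNorm f p (μ.restrict A)).toReal
  have hN : ∀ s > 0, N ^ 2 ≤ C * Real.exp (2 * (a - R) * s) := fun s hs => by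
    have hae : ∀ᵐ x ∂μ.restrict A, ‖(f : M → E) x‖ ≤ Real.exp (-(s * R)) * ‖(g s : M → E) x‖ := by
      refine (ae_restrict_iff' hA).2 ?_
      filter_upwards [hg s] with x hx hxA
      rw [Real.exp_neg, ← div_eq_inv_mul, le_div_iff₀' (Real.exp_pos _)]
      exact hx hxA
    have hle : N ≤ Real.exp (-(s * R)) * ‖g s‖ := by
      rw [Lp.norm_def, ← ENNReal.toReal_ofReal (Real.exp_pos _).le, ← ENNReal.toReal_mul]
      refine ENNReal.toReal_mono (by finiteness) ?_
      exact (eLpNorm_le_mul_eLpNorm_of_ae_le_mul hae p).trans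
        (by gcongr; exact Measure.restrict_le_self)
    calc N ^ 2 ≤ (Real.exp (-(s * R)) * ‖g s‖) ^ 2 := by gcongr
      _ = Real.exp (-(2 * R * s)) * ‖g s‖ ^ 2 := by
        rw [mul_pow, ← Real.exp_nat_mul]; push_cast; ring_nf
      _ ≤ Real.exp (-(2 * R * s)) * (C * Real.exp (2 * a * s)) := by gcongr; exact hbound s hs
      _ = C * Real.exp (2 * (a - R) * s) := by
        rw [mul_left_comm, ← Real.exp_add]; ring_nf
  have hlim : Tendsto (fun s => C * Real.exp (2 * (a - R) * s)) atTop (𝓝 0) := by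
    simpa using (Real.tendsto_exp_atBot.comp
      (tendsto_id.const_mul_atTop_of_neg (by linarith : 2 * (a - R) < 0))).const_mul C
  have hN0 : N = 0 := by
    have := ge_of_tendsto hlim ((eventually_gt_atTop 0).mono hN)
    exact pow_eq_zero_iff two_ne_zero |>.1 (le_antisymm this (sq_nonneg N))
  have hf0 := (eLpNorm_eq_zero_iff (Lp.aestronglyMeasurable f).restrict hp).1
    ((ENNReal.toReal_eq_zero_iff _).1 hN0 |>.resolve_right hfin)
  exact (ae_restrict_iff' hA).1 hf0

end Vanishing

theorem opNorm_le_of_ae_apply_eq {M : Type*} [MeasurableSpace M] {μ : Measure M}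
    {𝕜 : Type*} [NontriviallyNormedField 𝕜] {E : Type*} [NormedAddCommGroup E] [NormedSpace 𝕜 E]
    {p : ℝ≥0∞} [Fact (1 ≤ p)] {T : Lp E p μ →L[𝕜] Lp E p μ} (b : M → E →L[𝕜] E)
    (hT : ∀ u, (T u : M → E) =ᵐ[μ] fun x => b x ((u : M → E) x)) {C : ℝ} (hC : 0 ≤ C)
    (hb : ∀ᵐ x ∂μ, ‖b x‖ ≤ C) : ‖T‖ ≤ C :=
  T.opNorm_le_bound hC fun u => Lp.norm_le_mul_norm_of_ae_le_mul <| by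
    filter_upwards [hT u, hb] with x h1 h2
    rw [h1]
    exact (b x).le_of_opNorm_le h2 _

theorem finite_propagation_speed_BD_general
    {M : Type*} [MetricSpace M] [MeasurableSpace M] [BorelSpace M]
    (μ : Measure M)
    (m : ℕ)
    (Dom : Submodule ℂ (Lp (EuclideanSpace ℂ (Fin m)) 2 μ))
    (hdense : Dense (Dom : Set (Lp (EuclideanSpace ℂ (Fin m)) 2 μ)))
    (D : Lp (EuclideanSpace ℂ (Fin m)) 2 μ → Lp (EuclideanSpace ℂ (Fin m)) 2 μ)
    (hDadd : ∀ u ∈ Dom, ∀ v ∈ Dom, D (u + v) = D u + D v)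
    (κ : ℝ) (hκ : 0 < κ)
    (hcomm : ∀ (η : M → ℝ) (L : NNReal), LipschitzWith L η → (∃ C, ∀ x, |η x| ≤ C) →
      ∀ Mη : Lp (EuclideanSpace ℂ (Fin m)) 2 μ →L[ℂ] Lp (EuclideanSpace ℂ (Fin m)) 2 μ,
        (∀ u, (Mη u : M → EuclideanSpace ℂ (Fin m))
            =ᵐ[μ] fun x => (η x : ℂ) • (u : M → EuclideanSpace ℂ (Fin m)) x) →
        ∀ u ∈ Dom, Mη u ∈ Dom ∧
          ‖Mη (D u) - D (Mη u)‖ ≤ κ * L * ‖u‖ ∧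
          Mη (Mη (D u)) - (2 : ℂ) • Mη (D (Mη u)) + D (Mη (Mη u)) = 0)
    -- the multiplication operator `B`
    (b : M → Matrix (Fin m) (Fin m) ℂ)
    (Bop : Lp (EuclideanSpace ℂ (Fin m)) 2 μ →L[ℂ] Lp (EuclideanSpace ℂ (Fin m)) 2 μ)
    (hBop : ∀ u, (Bop u : M → EuclideanSpace ℂ (Fin m))
      =ᵐ[μ] fun x => Matrix.toEuclideanCLM (𝕜 := ℂ) (b x)
        ((u : M → EuclideanSpace ℂ (Fin m)) x))
    (hBsa : IsSelfAdjoint Bop)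
    (lam : ℝ) (hlam : 0 < lam)
    (hBpos : ∀ u, lam * ‖u‖ ^ 2 ≤ (inner (𝕜 := ℂ) (Bop u) u).re)
    (Binv : Lp (EuclideanSpace ℂ (Fin m)) 2 μ →L[ℂ] Lp (EuclideanSpace ℂ (Fin m)) 2 μ)
    (hBinv₁ : Binv.comp Bop = ContinuousLinearMap.id ℂ _)
    (hBinv₂ : Bop.comp Binv = ContinuousLinearMap.id ℂ _)
    -- `‖B‖_∞`: essential bound for the pointwise operator norms
    (CB : ℝ) (hCB : ∀ᵐ x ∂μ, ‖Matrix.toEuclideanCLM (𝕜 := ℂ) (b x)‖ ≤ CB)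
    -- the `C₀` group generated by `iBD`
    (V : ℝ → Lp (EuclideanSpace ℂ (Fin m)) 2 μ →L[ℂ] Lp (EuclideanSpace ℂ (Fin m)) 2 μ)
    (hV0 : V 0 = ContinuousLinearMap.id ℂ _)
    (hVdom : ∀ t : ℝ, ∀ u ∈ Dom, V t u ∈ Dom)
    (hVderiv : ∀ t : ℝ, ∀ u ∈ Dom,
      HasDerivAt (fun s => V s u) (Complex.I • V t (Bop (D u))) t)
    (hVBD : ∀ t : ℝ, ∀ u ∈ Dom, V t (Bop (D u)) = Bop (D (V t u)))
    -- contraction in the `B`-norm `‖u‖_B = ⟨B⁻¹u,u⟩^{1/2}`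
    (hVcontraction : ∀ (t : ℝ) u,
      (inner (𝕜 := ℂ) (Binv (V t u)) (V t u)).re ≤ (inner (𝕜 := ℂ) (Binv u) u).re)
    (K : Set M)
    (u : Lp (EuclideanSpace ℂ (Fin m)) 2 μ)
    (hu : ∀ᵐ x ∂μ, x ∉ K → (u : M → EuclideanSpace ℂ (Fin m)) x = 0)
    (t : ℝ) :
    ∀ᵐ x ∂μ, κ * CB * |t| < Metric.infDist x K →
      (V t u : M → EuclideanSpace ℂ (Fin m)) x = 0 := by
  rcases lt_or_ge CB 0 with hCBneg | hCB0
  · filter_upwards [hCB] with x hx using absurd ((norm_nonneg _).trans hx) hCBneg.not_ge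
  have hBpos' : Bop.IsPositive := ContinuousLinearMap.isPositive_def'.2
    ⟨hBsa, fun w => (mul_nonneg hlam.le (sq_nonneg _)).trans (hBpos w)⟩
  have hcoer := norm_sq_le_mul_re_inner_inv hBpos' hBinv₂
    (opNorm_le_of_ae_apply_eq _ hBop hCB0 hCB)
  have hDsym : ∀ v ∈ Dom, im ⟪D v, v⟫_ℂ = 0 := fun v hv =>
    im_inner_apply_self_eq_zero hBsa hBinv₁ hBinv₂ hV0 hVderiv hVBD hVcontraction hv
  have hD : HasLipschitzCommutators μ Dom D κ := hcomm
  refine ae_lt_imp_of_forall_le_imp fun R hR => ?_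
  have hR0 : 0 ≤ R := (by positivity : 0 ≤ κ * CB * |t|).trans hR.le
  set P := expDistWeightL2 (E := EuclideanSpace ℂ (Fin m)) μ K R
  refine ae_eq_zero_of_sq_norm_le_exp two_ne_zero
    (measurableSet_le measurable_const (Metric.continuous_infDist_pt K).measurable) hR
    (g := fun s => P s (V t u)) (C := CB * re ⟪Binv u, u⟫_ℂ)
    (fun s => (norm_expDistWeightL2_apply_of_le_infDist _).mono fun x h hx => (h hx).ge)
    fun s hs => ?_
  have henergy := re_inner_inv_apply_le_exp_mul hBsa hBinv₁ hBinv₂ hV0 hVderiv hVBD hVdom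
    hdense hDsym (expDistWeightL2_comm_of_ae_eq _ hBop)
    (fun v hv => (hD.commutator_expDistWeightL2 K R s hv).1) (by positivity)
    (fun v hv => hD.norm_commutator_expDistWeightL2_le K R hDadd hR0 hs hv) hcoer t u
  rw [expDistWeightL2_apply_eq_self hR0 hu] at henergy
  calc ‖P s (V t u)‖ ^ 2 ≤ CB * re ⟪Binv (P s (V t u)), P s (V t u)⟫_ℂ := hcoer _
    _ ≤ CB * (Real.exp (2 * (κ * s) * CB * |t|) * re ⟪Binv u, u⟫_ℂ) := by gcongr
    _ = CB * re ⟪Binv u, u⟫_ℂ * Real.exp (2 * (κ * CB * |t|) * s) := by ring_nf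

/-- **Finite propagation speed for perturbed operators `BD`** (McIntosh–Morris,
Case II of Section 4, improved bound): the group generated by `iBD` has
propagation speed at most `κ‖B‖_∞`. -/
theorem finite_propagation_speed_BD
    {M : Type*} [MetricSpace M] [MeasurableSpace M] [BorelSpace M]
    (μ : Measure M) [SigmaFinite μ]
    (m : ℕ) (hm : 1 ≤ m)
    (Dom : Submodule ℂ (Lp (EuclideanSpace ℂ (Fin m)) 2 μ))
    (hdense : Dense (Dom : Set (Lp (EuclideanSpace ℂ (Fin m)) 2 μ)))
    (D : Lp (EuclideanSpace ℂ (Fin m)) 2 μ → Lp (EuclideanSpace ℂ (Fin m)) 2 μ)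
    (hDadd : ∀ u ∈ Dom, ∀ v ∈ Dom, D (u + v) = D u + D v)
    (hDsmul : ∀ (a : ℂ), ∀ u ∈ Dom, D (a • u) = a • D u)
    (κ : ℝ) (hκ : 0 < κ)
    (hcomm : ∀ (η : M → ℝ) (L : NNReal), LipschitzWith L η → (∃ C, ∀ x, |η x| ≤ C) →
      ∀ Mη : Lp (EuclideanSpace ℂ (Fin m)) 2 μ →L[ℂ] Lp (EuclideanSpace ℂ (Fin m)) 2 μ,
        (∀ u, (Mη u : M → EuclideanSpace ℂ (Fin m))
            =ᵐ[μ] fun x => (η x : ℂ) • (u : M → EuclideanSpace ℂ (Fin m)) x) →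
        ∀ u ∈ Dom, Mη u ∈ Dom ∧
          ‖Mη (D u) - D (Mη u)‖ ≤ κ * L * ‖u‖ ∧
          Mη (Mη (D u)) - (2 : ℂ) • Mη (D (Mη u)) + D (Mη (Mη u)) = 0)
    -- the multiplication operator `B`
    (b : M → Matrix (Fin m) (Fin m) ℂ)
    (Bop : Lp (EuclideanSpace ℂ (Fin m)) 2 μ →L[ℂ] Lp (EuclideanSpace ℂ (Fin m)) 2 μ)
    (hBop : ∀ u, (Bop u : M → EuclideanSpace ℂ (Fin m))
      =ᵐ[μ] fun x => Matrix.toEuclideanCLM (𝕜 := ℂ) (b x)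
        ((u : M → EuclideanSpace ℂ (Fin m)) x))
    (hBsa : IsSelfAdjoint Bop)
    (lam : ℝ) (hlam : 0 < lam)
    (hBpos : ∀ u, lam * ‖u‖ ^ 2 ≤ (inner (𝕜 := ℂ) (Bop u) u).re)
    (Binv : Lp (EuclideanSpace ℂ (Fin m)) 2 μ →L[ℂ] Lp (EuclideanSpace ℂ (Fin m)) 2 μ)
    (hBinv₁ : Binv.comp Bop = ContinuousLinearMap.id ℂ _)
    (hBinv₂ : Bop.comp Binv = ContinuousLinearMap.id ℂ _)
    -- `‖B‖_∞`: essential bound for the pointwise operator norms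
    (CB : ℝ) (hCB : ∀ᵐ x ∂μ, ‖Matrix.toEuclideanCLM (𝕜 := ℂ) (b x)‖ ≤ CB)
    -- the `C₀` group generated by `iBD`
    (V : ℝ → Lp (EuclideanSpace ℂ (Fin m)) 2 μ →L[ℂ] Lp (EuclideanSpace ℂ (Fin m)) 2 μ)
    (hV0 : V 0 = ContinuousLinearMap.id ℂ _)
    (hVgrp : ∀ s t : ℝ, V (s + t) = (V s).comp (V t))
    (hVcont : ∀ u, Continuous fun t => V t u)
    (hVdom : ∀ t : ℝ, ∀ u ∈ Dom, V t u ∈ Dom)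
    (hVderiv : ∀ t : ℝ, ∀ u ∈ Dom,
      HasDerivAt (fun s => V s u) (Complex.I • V t (Bop (D u))) t)
    (hVBD : ∀ t : ℝ, ∀ u ∈ Dom, V t (Bop (D u)) = Bop (D (V t u)))
    -- contraction in the `B`-norm `‖u‖_B = ⟨B⁻¹u,u⟩^{1/2}`
    (hVcontraction : ∀ (t : ℝ) u,
      (inner (𝕜 := ℂ) (Binv (V t u)) (V t u)).re ≤ (inner (𝕜 := ℂ) (Binv u) u).re)
    (K : Set M) (hK : IsClosed K)
    (u : Lp (EuclideanSpace ℂ (Fin m)) 2 μ)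
    (hu : ∀ᵐ x ∂μ, x ∉ K → (u : M → EuclideanSpace ℂ (Fin m)) x = 0)
    (t : ℝ) :
    ∀ᵐ x ∂μ, κ * CB * |t| < Metric.infDist x K →
      (V t u : M → EuclideanSpace ℂ (Fin m)) x = 0 :=
  finite_propagation_speed_BD_general μ m Dom hdense D hDadd κ hκ hcomm b Bop hBop hBsa lam hlam
    hBpos Binv hBinv₁ hBinv₂ CB hCB V hV0 hVdom hVderiv hVBD hVcontraction K u hu t
end
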